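/- arXiv:1412.4496 — 8 statements merged into one kernel-verified Lean document; each statement's English description precedes it below -/
import Mathlib

section
/- Let B ⊆ ℕ^n be the set of bases of a discrete polymatroid that satisfies the one-sided (left-sided or right-sided) strong symmetric exchange property. Then B is sortable: for all u, v ∈ B, the sorted pair sort(u,v) = (u′, v′) again lies in B × B, where, setting s_0 = 0 and s_i = (u_1+v_1)+⋯+(u_i+v_i) for i = 1,…,n, one has u′_i = ⌈s_i/2⌉ − ⌈s_{i−1}/2⌉ and v′_i = ⌊s_i/2⌋ − ⌊s_{i−1}/2⌋ for i = 1,…,n. -/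
/-!
Write `s_k` for the prefix sums of `w = u + v`. The floor half `v'` of `sort(u, v)` is the unique
vector with prefix sums `⌊s_k / 2⌋`, and then `u' = w - v'`. So it suffices to find `a, b ∈ B`
with `a + b = w` and `b_1 + ⋯ + b_k = ⌊s_k / 2⌋` for all `k`.

Among all such splits `(a, b)` of `w` (starting from `(u, v)`), take one whose defects
`|b_1 + ⋯ + b_k - ⌊s_k / 2⌋|` are minimal colexicographically, i.e. compared from the largest `k`
downwards. The defect vanishes at `k = n` because all bases have the same modulus. If it vanishes
at `P + 1` but not at `P`, then `a_P` and `b_P` and the prefix sums before `P` are ordered in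
opposite directions, so the left-sided exchange at `P` with some `q < P` moves one unit between
`a` and `b`. This changes the prefix sums of `b` only at the indices in `(q, P]`, and lowers the
defect at `P`, contradicting minimality. The right-sided case is the left-sided one for the
reversed coordinates.
-/

open Finset

/-- `u - e i + e j` (exchange move on integer vectors). -/
def exch {n : ℕ} (u : Fin n → ℕ) (i j : Fin n) : Fin n → ℕ :=
  fun l => if l = i then u l - 1 else if l = j then u l + 1 else u l

/-- Symmetric exchange property for a set of vectors. -/
def SymExch {n : ℕ} (B : Set (Fin n → ℕ)) : Prop :=
  ∀ u ∈ B, ∀ v ∈ B, ∀ i : Fin n, v i < u i →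
    ∃ j : Fin n, u j < v j ∧ exch u i j ∈ B ∧ exch v j i ∈ B

/-- Left-sided strong symmetric exchange property. -/
def LeftSSEP {n : ℕ} (B : Set (Fin n → ℕ)) : Prop :=
  ∀ u ∈ B, ∀ v ∈ B, ∀ i : Fin n, v i < u i →
    (∑ j ∈ Finset.Iio i, u j) < (∑ j ∈ Finset.Iio i, v j) →
    ∃ j : Fin n, j < i ∧ u j < v j ∧ exch u i j ∈ B ∧ exch v j i ∈ B

/-- Right-sided strong symmetric exchange property. -/
def RightSSEP {n : ℕ} (B : Set (Fin n → ℕ)) : Prop :=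
  ∀ u ∈ B, ∀ v ∈ B, ∀ i : Fin n, v i < u i →
    (∑ j ∈ Finset.Ioi i, u j) < (∑ j ∈ Finset.Ioi i, v j) →
    ∃ j : Fin n, i < j ∧ u j < v j ∧ exch u i j ∈ B ∧ exch v j i ∈ B

section

variable {n : ℕ}

/-- The sum of the first `k` coordinates; with `0`-based indices the paper's `s_k` is
`prefixSum (u + v) k`. -/
def prefixSum (x : Fin n → ℕ) (k : ℕ) : ℕ :=
  ∑ j ∈ univ.filter (fun j : Fin n => (j : ℕ) < k), x j

lemma prefixSum_add (x y : Fin n → ℕ) (k : ℕ) :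
    prefixSum (x + y) k = prefixSum x k + prefixSum y k :=
  sum_add_distrib

lemma prefixSum_succ (x : Fin n → ℕ) (i : Fin n) :
    prefixSum x (i + 1) = prefixSum x i + x i := by
  have : univ.filter (fun j : Fin n => (j : ℕ) < i + 1)
      = insert i (univ.filter fun j : Fin n => (j : ℕ) < i) := by
    ext j
    simp only [mem_filter, mem_univ, true_and, mem_insert, Fin.ext_iff]
    omega
  rw [prefixSum, this, sum_insert (by simp), prefixSum, add_comm]

lemma prefixSum_of_le (x : Fin n → ℕ) {k : ℕ} (hk : n ≤ k) : prefixSum x k = ∑ j, x j := by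
  rw [prefixSum, filter_true_of_mem fun j _ => j.isLt.trans_le hk]

lemma sum_Iio_eq_prefixSum (x : Fin n → ℕ) (i : Fin n) :
    ∑ j ∈ Iio i, x j = prefixSum x i := by
  rw [prefixSum]
  congr 1
  ext j
  simp

lemma prefixSum_single (i : Fin n) (c k : ℕ) :
    prefixSum (Pi.single i c) k = if (i : ℕ) < k then c else 0 := by
  rw [prefixSum, sum_pi_single']
  simp

lemma exch_add_single {x : Fin n → ℕ} {i j : Fin n} (hij : i ≠ j) (hx : 1 ≤ x i) :
    exch x i j + Pi.single i 1 = x + Pi.single j 1 := by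
  ext l
  simp only [Pi.add_apply, exch, Pi.single_apply]
  split_ifs <;> simp_all

lemma prefixSum_exch {x : Fin n → ℕ} {i j : Fin n} (hij : i ≠ j) (hx : 1 ≤ x i) (k : ℕ) :
    prefixSum (exch x i j) k + (if (i : ℕ) < k then 1 else 0)
      = prefixSum x k + (if (j : ℕ) < k then 1 else 0) := by
  rw [← prefixSum_single, ← prefixSum_single, ← prefixSum_add, ← prefixSum_add,
    exch_add_single hij hx]

lemma exch_add_exch {x y : Fin n → ℕ} {i j : Fin n} (hij : i ≠ j) (hx : 1 ≤ x i)
    (hy : 1 ≤ y j) : exch x i j + exch y j i = x + y := by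
  have hx' := exch_add_single hij hx
  have hy' := exch_add_single hij.symm hy
  ext l
  have := congrFun hx' l
  have := congrFun hy' l
  simp only [Pi.add_apply] at *
  omega

def sortDefect (w b : Fin n → ℕ) : Colex (Fin n → ℕ) :=
  toColex fun k => Nat.dist (prefixSum b k) (prefixSum w k / 2)

lemma sortDefect_lt {w b b' : Fin n → ℕ} {P : Fin n}
    (hP : Nat.dist (prefixSum b' P) (prefixSum w P / 2)
      < Nat.dist (prefixSum b P) (prefixSum w P / 2))
    (habove : ∀ k : Fin n, P < k → prefixSum b' k = prefixSum b k) :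
    sortDefect w b' < sortDefect w b :=
  ⟨P, fun k hk => by simp only [sortDefect, Pi.toColex_apply, habove k hk], hP⟩

lemma LeftSSEP.exists_exch {B : Set (Fin n → ℕ)} (hL : LeftSSEP B) {x y : Fin n → ℕ}
    (hx : x ∈ B) (hy : y ∈ B) {P : Fin n} (hP : y P < x P)
    (hpre : prefixSum x P < prefixSum y P) :
    ∃ x' ∈ B, ∃ y' ∈ B, x' + y' = x + y ∧
      prefixSum x' P = prefixSum x P + 1 ∧ prefixSum y' P + 1 = prefixSum y P ∧
      ∀ k : Fin n, P < k → prefixSum x' k = prefixSum x k ∧ prefixSum y' k = prefixSum y k := by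
  rw [← sum_Iio_eq_prefixSum, ← sum_Iio_eq_prefixSum] at hpre
  obtain ⟨q, hqP, hq, hxq, hyq⟩ := hL x hx y hy P hP hpre
  have hx1 : 1 ≤ x P := by omega
  have hy1 : 1 ≤ y q := by omega
  have hqP' : (q : ℕ) < P := hqP
  refine ⟨_, hxq, _, hyq, exch_add_exch hqP.ne' hx1 hy1, ?_, ?_, fun k hk => ⟨?_, ?_⟩⟩
  · simpa [hqP'] using prefixSum_exch hqP.ne' hx1 P
  · simpa [hqP'] using prefixSum_exch hqP.ne hy1 P
  · have hk' : (P : ℕ) < k := hk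
    simpa [hk', hqP'.trans hk'] using prefixSum_exch hqP.ne' hx1 k
  · have hk' : (P : ℕ) < k := hk
    simpa [hk', hqP'.trans hk'] using prefixSum_exch hqP.ne hy1 k

lemma exists_split_sortDefect_lt {B : Set (Fin n → ℕ)} (hL : LeftSSEP B) {a b : Fin n → ℕ}
    (ha : a ∈ B) (hb : b ∈ B) {P : Fin n}
    (hsucc : prefixSum b (P + 1) = prefixSum (a + b) (P + 1) / 2)
    (hP : prefixSum b P ≠ prefixSum (a + b) P / 2) :
    ∃ a' ∈ B, ∃ b' ∈ B, a' + b' = a + b ∧ sortDefect (a + b) b' < sortDefect (a + b) b := by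
  rw [prefixSum_succ, prefixSum_succ, prefixSum_add] at hsucc
  rw [prefixSum_add] at hP
  rcases hP.lt_or_gt with hlt | hgt
  · obtain ⟨b', hb', a', ha', hsum, hb'P, -, habove⟩ :=
      hL.exists_exch hb ha (P := P) (by simp only [Pi.add_apply] at hsucc; omega) (by omega)
    refine ⟨a', ha', b', hb', by rw [add_comm, hsum, add_comm], sortDefect_lt (P := P) ?_ ?_⟩
    · rw [hb'P, prefixSum_add]
      unfold Nat.dist
      omega
    · exact fun k hk => (habove k hk).1
  · obtain ⟨a', ha', b', hb', hsum, -, hb'P, habove⟩ :=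
      hL.exists_exch ha hb (P := P) (by simp only [Pi.add_apply] at hsucc; omega) (by omega)
    refine ⟨a', ha', b', hb', hsum, sortDefect_lt (P := P) ?_ ?_⟩
    · rw [prefixSum_add]
      unfold Nat.dist
      omega
    · exact fun k hk => (habove k hk).2

lemma exists_split_prefixSum_eq_half {B : Set (Fin n → ℕ)}
    (hmod : ∀ u ∈ B, ∀ v ∈ B, ∑ i, u i = ∑ i, v i) (hL : LeftSSEP B)
    {u v : Fin n → ℕ} (hu : u ∈ B) (hv : v ∈ B) :
    ∃ a ∈ B, ∃ b ∈ B, a + b = u + v ∧ ∀ k ≤ n, prefixSum b k = prefixSum (u + v) k / 2 := by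
  obtain ⟨b, ⟨hb, a, ha, hab⟩, hmin⟩ := (InvImage.wf (sortDefect (u + v)) wellFounded_lt).has_min
    {b | b ∈ B ∧ ∃ a ∈ B, a + b = u + v} ⟨v, hv, u, hu, rfl⟩
  refine ⟨a, ha, b, hb, hab, fun k hk => Nat.decreasingInduction (fun P hP hsucc => ?_) ?_ hk⟩
  · by_contra hne
    obtain ⟨a', ha', b', hb', hsum, hlt⟩ :=
      exists_split_sortDefect_lt hL ha hb (P := ⟨P, hP⟩) (hab ▸ hsucc) (hab ▸ hne)
    exact hmin b' ⟨hb', a', ha', hsum.trans hab⟩ (hab ▸ hlt)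
  · rw [← hab, prefixSum_add, prefixSum_of_le a le_rfl, prefixSum_of_le b le_rfl, hmod a ha b hb]
    omega

/-- The first component `u'` of `sort(u, v)`: `u'_1 + ⋯ + u'_i = ⌈s_i / 2⌉`. -/
def sortCeil (u v : Fin n → ℕ) : Fin n → ℕ :=
  fun i => (prefixSum (u + v) (i + 1) + 1) / 2 - (prefixSum (u + v) i + 1) / 2

/-- The second component `v'` of `sort(u, v)`: `v'_1 + ⋯ + v'_i = ⌊s_i / 2⌋`. -/
def sortFloor (u v : Fin n → ℕ) : Fin n → ℕ :=
  fun i => prefixSum (u + v) (i + 1) / 2 - prefixSum (u + v) i / 2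

def IsSortable (B : Set (Fin n → ℕ)) : Prop :=
  ∀ u ∈ B, ∀ v ∈ B, sortCeil u v ∈ B ∧ sortFloor u v ∈ B

lemma sort_eq_of_prefixSum_eq_half {u v a b : Fin n → ℕ} (hab : a + b = u + v)
    (hb : ∀ k ≤ n, prefixSum b k = prefixSum (u + v) k / 2) :
    sortCeil u v = a ∧ sortFloor u v = b := by
  have h0 (i : Fin n) := hb i i.isLt.le
  have h1 (i : Fin n) := hb (i + 1) i.isLt
  simp only [← hab, prefixSum_add, prefixSum_succ, Pi.add_apply] at h0 h1
  constructor <;> funext i <;> have := h0 i <;> have := h1 i <;>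
    simp only [sortCeil, sortFloor, ← hab, prefixSum_add, prefixSum_succ, Pi.add_apply] <;> omega

lemma isSortable_of_leftSSEP {B : Set (Fin n → ℕ)}
    (hmod : ∀ u ∈ B, ∀ v ∈ B, ∑ i, u i = ∑ i, v i) (hL : LeftSSEP B) : IsSortable B := by
  intro u hu v hv
  obtain ⟨a, ha, b, hb, hab, hhalf⟩ := exists_split_prefixSum_eq_half hmod hL hu hv
  obtain ⟨hceil, hfloor⟩ := sort_eq_of_prefixSum_eq_half hab hhalf
  exact ⟨hceil ▸ ha, hfloor ▸ hb⟩

lemma exch_comp_rev (x : Fin n → ℕ) (i j : Fin n) :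
    exch x i j ∘ Fin.rev = exch (x ∘ Fin.rev) i.rev j.rev := by
  funext l
  simp only [Function.comp_apply, exch, Fin.rev_eq_iff]

lemma sum_comp_rev {M : Type*} [AddCommMonoid M] (x : Fin n → M) : ∑ i : Fin n, x i.rev = ∑ i, x i :=
  Equiv.sum_comp Fin.revPerm x

lemma sum_Ioi_rev {M : Type*} [AddCommMonoid M] (x : Fin n → M) (i : Fin n) :
    ∑ j ∈ Ioi i.rev, x j.rev = ∑ j ∈ Iio i, x j := by
  rw [← Fin.finsetImage_rev_Iio, sum_image fun _ _ _ _ h => Fin.rev_injective h]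
  simp only [Fin.rev_rev]

lemma leftSSEP_preimage_rev {B : Set (Fin n → ℕ)} (hR : RightSSEP B) :
    LeftSSEP ((· ∘ Fin.rev) ⁻¹' B) := by
  intro x hx y hy i hi hpre
  obtain ⟨j, hij, hj, hxj, hyj⟩ := hR _ hx _ hy i.rev (by simpa using hi)
    (by simpa only [Function.comp_apply, sum_Ioi_rev] using hpre)
  refine ⟨j.rev, Fin.rev_lt_iff.mpr hij, by simpa using hj, ?_, ?_⟩
  · simpa only [Set.mem_preimage, exch_comp_rev, Fin.rev_rev] using hxj
  · simpa only [Set.mem_preimage, exch_comp_rev, Fin.rev_rev] using hyj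

lemma prefixSum_comp_rev_add (x : Fin n → ℕ) {k m : ℕ} (hkm : k + m = n) :
    prefixSum (x ∘ Fin.rev) k + prefixSum x m = ∑ j, x j := by
  have : prefixSum (x ∘ Fin.rev) k = ∑ j ∈ univ.filter (fun j : Fin n => ¬ (j : ℕ) < m), x j := by
    rw [prefixSum, sum_filter, sum_filter, ← Equiv.sum_comp Fin.revPerm]
    refine sum_congr rfl fun j _ => ?_
    simp only [Fin.revPerm_apply, Fin.val_rev, Function.comp_apply, Fin.rev_rev]
    have := j.isLt
    split_ifs <;> first | rfl | omega
  rw [this, prefixSum, add_comm, sum_filter_add_sum_filter_not]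

lemma sort_comp_rev {u v : Fin n → ℕ} (huv : ∑ i, u i = ∑ i, v i) :
    sortCeil (u ∘ Fin.rev) (v ∘ Fin.rev) ∘ Fin.rev = sortFloor u v ∧
      sortFloor (u ∘ Fin.rev) (v ∘ Fin.rev) ∘ Fin.rev = sortCeil u v := by
  have hcomp : u ∘ Fin.rev + v ∘ Fin.rev = (u + v) ∘ Fin.rev := rfl
  have htotal : ∑ j, (u + v) j = 2 * ∑ j, u j := by
    rw [Pi.add_def, sum_add_distrib, huv]
    ring
  have h0 (i : Fin n) := prefixSum_comp_rev_add (u + v) (k := i.rev + 1) (m := i)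
    (by rw [Fin.val_rev]; omega)
  have h1 (i : Fin n) := prefixSum_comp_rev_add (u + v) (k := i.rev) (m := i + 1)
    (by rw [Fin.val_rev]; omega)
  constructor <;> funext i <;> have := h0 i <;> have := h1 i <;>
    simp only [sortCeil, sortFloor, Function.comp_apply, hcomp] <;> omega

lemma IsSortable.of_preimage_rev {B : Set (Fin n → ℕ)}
    (hmod : ∀ u ∈ B, ∀ v ∈ B, ∑ i, u i = ∑ i, v i) (h : IsSortable ((· ∘ Fin.rev) ⁻¹' B)) :
    IsSortable B := by
  intro u hu v hv
  have hrev (x : Fin n → ℕ) (hx : x ∈ B) : x ∘ Fin.rev ∈ (· ∘ Fin.rev) ⁻¹' B := by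
    simpa [Function.comp_assoc, Fin.rev_involutive.comp_self] using hx
  obtain ⟨hceil, hfloor⟩ := h _ (hrev u hu) _ (hrev v hv)
  obtain ⟨hceil_rev, hfloor_rev⟩ := sort_comp_rev (hmod u hu v hv)
  exact ⟨hfloor_rev ▸ hfloor, hceil_rev ▸ hceil⟩

end

theorem sortable_of_oneSided_SSEP_general {n : ℕ} (B : Set (Fin n → ℕ))
    (hmod : ∀ u ∈ B, ∀ v ∈ B, ∑ i, u i = ∑ i, v i)
    (hone : LeftSSEP B ∨ RightSSEP B) :
    ∀ u ∈ B, ∀ v ∈ B,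
      (fun i : Fin n =>
          ((∑ j ∈ Finset.univ.filter (fun j : Fin n => (j : ℕ) < (i : ℕ) + 1), (u j + v j)) + 1) / 2
            - ((∑ j ∈ Finset.univ.filter (fun j : Fin n => (j : ℕ) < (i : ℕ)), (u j + v j)) + 1) / 2) ∈ B ∧
      (fun i : Fin n =>
          (∑ j ∈ Finset.univ.filter (fun j : Fin n => (j : ℕ) < (i : ℕ) + 1), (u j + v j)) / 2
            - (∑ j ∈ Finset.univ.filter (fun j : Fin n => (j : ℕ) < (i : ℕ)), (u j + v j)) / 2) ∈ B := by
  rcases hone with hL | hR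
  · exact isSortable_of_leftSSEP hmod hL
  · have hmod_rev : ∀ u ∈ (· ∘ Fin.rev) ⁻¹' B, ∀ v ∈ (· ∘ Fin.rev) ⁻¹' B,
        ∑ i, u i = ∑ i, v i := fun u hu v hv => by
      simpa only [Function.comp_apply, sum_comp_rev] using hmod _ hu _ hv
    exact (isSortable_of_leftSSEP hmod_rev (leftSSEP_preimage_rev hR)).of_preimage_rev hmod

/-- a base set of a discrete polymatroid satisfying the one-sided
strong symmetric exchange property is sortable. -/
theorem sortable_of_oneSided_SSEP {n : ℕ} (B : Set (Fin n → ℕ))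
    (hfin : B.Finite) (hne : B.Nonempty)
    (hmod : ∀ u ∈ B, ∀ v ∈ B, ∑ i, u i = ∑ i, v i)
    (hex : SymExch B)
    (hone : LeftSSEP B ∨ RightSSEP B) :
    ∀ u ∈ B, ∀ v ∈ B,
      (fun i : Fin n =>
          ((∑ j ∈ Finset.univ.filter (fun j : Fin n => (j : ℕ) < (i : ℕ) + 1), (u j + v j)) + 1) / 2
            - ((∑ j ∈ Finset.univ.filter (fun j : Fin n => (j : ℕ) < (i : ℕ)), (u j + v j)) + 1) / 2) ∈ B ∧
      (fun i : Fin n =>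
          (∑ j ∈ Finset.univ.filter (fun j : Fin n => (j : ℕ) < (i : ℕ) + 1), (u j + v j)) / 2
            - (∑ j ∈ Finset.univ.filter (fun j : Fin n => (j : ℕ) < (i : ℕ)), (u j + v j)) / 2) ∈ B :=
  sortable_of_oneSided_SSEP_general B hmod hone
end

section
/- Let K be a field, S = K[x_1,…,x_n], and let d ≥ 1 and s_1 ≤ s_2 ≤ ⋯ ≤ s_d, t_1 ≤ t_2 ≤ ⋯ ≤ t_d be integers in [1,n] with s_k ≤ t_k for k = 1,…,d. Then the product of monomial prime ideals P_{[s_1,t_1]}⋯P_{[s_d,t_d]} equals the ideal of S generated by all monomials x^u with u ∈ ℕ^n such that u_1+⋯+u_n = d and, for every i ∈ [1,n], the inequalities #{k ∈ [1,d] : t_k ≤ i} ≤ u_1+⋯+u_i ≤ #{k ∈ [1,d] : s_k ≤ i} hold. -/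
/-!
Expanding the product, `∏ₖ P_{[s_k,t_k]}` is generated by the monomials `∏ₖ x_{g(k)}` with
`s_k ≤ g(k) ≤ t_k`, whose exponent vector counts the fibres of `g`. The partial sums of that
vector count `#{k : g(k) ≤ i}`, which lies between `#{k : t_k ≤ i}` and `#{k : s_k ≤ i}`.
Conversely, an exponent vector `u` obeying these bounds is realised by the nondecreasing `g`
sending `k` to the least `i` with `k ≤ u_1 + ⋯ + u_i` (`k < …` once the factors are
indexed from `0`, as in `Fin d`); the bounds with `s`, `t` monotone give
exactly `s_k ≤ g(k) ≤ t_k`.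
-/

open Finset MvPolynomial

/-- The monomial prime ideal `P_{[s,t]} = (x_s, …, x_t)`. -/
noncomputable def Pst {n : ℕ} (K : Type*) [Field K] (s t : Fin n) : Ideal (MvPolynomial (Fin n) K) :=
  Ideal.span ((fun i => (X i : MvPolynomial (Fin n) K)) '' {i | s ≤ i ∧ i ≤ t})

section PrefixSums

variable {ι α : Type*} [Fintype ι] [LinearOrder α] [LocallyFiniteOrderBot α]

theorem card_filter_le_eq_sum_Iic_card_filter_eq (g : ι → α) (i : α) :
    #{k | g k ≤ i} = ∑ j ∈ Iic i, #{k | g k = j} := by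
  rw [card_eq_sum_card_fiberwise (f := g) (t := Iic i) fun k hk => by simpa using hk]
  refine sum_congr rfl fun j hj => ?_
  rw [filter_filter]
  congr 1
  ext k
  simp only [mem_filter, mem_univ, true_and, and_iff_right_iff_imp]
  exact fun hk => hk ▸ mem_Iic.mp hj

theorem card_filter_le_le_sum_Iic_card_filter_eq {s t g : ι → α}
    (hg : ∀ k, s k ≤ g k ∧ g k ≤ t k) (i : α) :
    #{k | t k ≤ i} ≤ ∑ j ∈ Iic i, #{k | g k = j} ∧
      ∑ j ∈ Iic i, #{k | g k = j} ≤ #{k | s k ≤ i} := by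
  rw [← card_filter_le_eq_sum_Iic_card_filter_eq]
  exact ⟨card_le_card <| monotone_filter_right _ fun k _ => (hg k).2.trans,
    card_le_card <| monotone_filter_right _ fun k _ => (hg k).1.trans⟩

theorem eq_of_forall_sum_Iic_eq [WellFoundedLT α] {M : Type*} [AddCancelCommMonoid M]
    {u v : α → M} (h : ∀ i, ∑ j ∈ Iic i, u j = ∑ j ∈ Iic i, v j) : u = v := by
  funext i
  induction i using WellFoundedLT.induction with
  | ind i ih =>
    have hIio : ∑ j ∈ Iio i, u j = ∑ j ∈ Iio i, v j :=
      sum_congr rfl fun j hj => ih j (mem_Iio.mp hj)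
    have hi := h i
    rw [← Iio_insert, sum_insert notMem_Iio_self, sum_insert notMem_Iio_self, hIio] at hi
    exact add_right_cancel hi

end PrefixSums

theorem exists_forall_le_iff_of_monotone {α : Type*} [LinearOrder α] [WellFoundedLT α]
    {p : α → Prop} (hp : Monotone p) (h : ∃ i, p i) : ∃ i, ∀ j, i ≤ j ↔ p j := by
  obtain ⟨i, hi, hmin⟩ := wellFounded_lt.has_min {j | p j} h
  exact ⟨i, fun j => ⟨fun hij => hp hij hi, fun hj => not_lt.mp (hmin j hj)⟩⟩

theorem Fintype.prod_comp_eq_prod_pow_card_filter {ι κ M : Type*} [Fintype ι] [Fintype κ]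
    [DecidableEq κ] [CommMonoid M] (f : κ → M) (g : ι → κ) :
    ∏ k, f (g k) = ∏ i, f i ^ #{k | g k = i} := by
  simp only [← Finset.prod_fiberwise' univ g f, prod_const]

section MonotoneCount

variable {d : ℕ} {α : Type*} [LinearOrder α]

theorem card_filter_le_le_of_lt_apply {s : Fin d → α} (hs : Monotone s) {i : α} {k : Fin d}
    (h : i < s k) : #{j | s j ≤ i} ≤ k := by
  rw [← Fin.card_Iio k]
  refine card_le_card fun j hj => mem_Iio.mpr ?_
  by_contra hkj
  exact not_lt.mpr (mem_filter.mp hj).2 (h.trans_le (hs (not_lt.mp hkj)))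

theorem lt_card_filter_le_apply {t : Fin d → α} (ht : Monotone t) (k : Fin d) :
    (k : ℕ) < #{j | t j ≤ t k} := by
  rw [Nat.lt_iff_add_one_le, ← Fin.card_Iic k]
  exact card_le_card fun j hj => mem_filter.mpr ⟨mem_univ j, ht (mem_Iic.mp hj)⟩

end MonotoneCount

section LatticePath

variable {n d : ℕ}

theorem exists_le_iff_lt_sum_Iic {u : Fin n → ℕ} (hu : ∑ i, u i = d) :
    ∃ g : Fin d → Fin n, ∀ k i, g k ≤ i ↔ (k : ℕ) < ∑ j ∈ Iic i, u j := by
  suffices ∀ k : Fin d, ∃ i, ∀ j, i ≤ j ↔ (k : ℕ) < ∑ l ∈ Iic j, u l by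
    choose g hg using this
    exact ⟨g, hg⟩
  intro k
  refine exists_forall_le_iff_of_monotone
    (fun i j hij hi => hi.trans_le (sum_le_sum_of_subset (Iic_subset_Iic.mpr hij))) ?_
  cases n with
  | zero => exact (k.pos.ne' (by simpa using hu.symm)).elim
  | succ m => exact ⟨⊤, by rw [Iic_top, hu]; exact k.isLt⟩

theorem card_filter_eq_of_le_iff_lt_sum_Iic {u : Fin n → ℕ} (hu : ∑ i, u i = d)
    {g : Fin d → Fin n} (hg : ∀ k i, g k ≤ i ↔ (k : ℕ) < ∑ j ∈ Iic i, u j) (i : Fin n) :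
    #{k | g k = i} = u i := by
  refine congrFun (eq_of_forall_sum_Iic_eq (u := fun i => #{k | g k = i}) fun i => ?_) i
  have hle : ∑ j ∈ Iic i, u j ≤ d := hu ▸ sum_le_sum_of_subset (subset_univ _)
  rw [← card_filter_le_eq_sum_Iic_card_filter_eq, filter_congr fun k _ => hg k i,
    Fin.card_filter_val_lt, min_eq_right hle]

theorem exists_card_filter_eq_of_latticePath {s t : Fin d → Fin n} (hs : Monotone s)
    (ht : Monotone t) {u : Fin n → ℕ} (hu : ∑ i, u i = d)
    (hbounds : ∀ i, #{k | t k ≤ i} ≤ ∑ j ∈ Iic i, u j ∧ ∑ j ∈ Iic i, u j ≤ #{k | s k ≤ i}) :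
    ∃ g : Fin d → Fin n, (∀ k, s k ≤ g k ∧ g k ≤ t k) ∧ ∀ i, #{k | g k = i} = u i := by
  obtain ⟨g, hg⟩ := exists_le_iff_lt_sum_Iic hu
  refine ⟨g, fun k => ⟨?_, ?_⟩, card_filter_eq_of_le_iff_lt_sum_Iic hu hg⟩
  · by_contra! hlt
    have hcount := card_filter_le_le_of_lt_apply hs hlt
    have hupper := (hbounds (g k)).2
    have hk := (hg k (g k)).mp le_rfl
    omega
  · rw [hg]
    exact (lt_card_filter_le_apply ht k).trans_le (hbounds (t k)).1

end LatticePath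

theorem prod_Pst_eq_span {ι : Type*} [Fintype ι] {n : ℕ} (K : Type*) [Field K]
    (s t : ι → Fin n) :
    ∏ k, Pst K (s k) (t k) = Ideal.span {m | ∃ g : ι → Fin n,
      (∀ k, s k ≤ g k ∧ g k ≤ t k) ∧ m = ∏ k, (X (g k) : MvPolynomial (Fin n) K)} := by
  simp only [Pst]
  rw [Ideal.prod_span]
  congr 1
  ext m
  rw [Set.mem_fintype_prod]
  constructor
  · rintro ⟨f, hf, rfl⟩
    choose g hg hgf using hf
    exact ⟨g, hg, by simp only [hgf]⟩
  · rintro ⟨g, hg, rfl⟩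
    exact ⟨_, fun k => ⟨g k, hg k, rfl⟩, rfl⟩

theorem prod_interval_primes_eq_latticePath_ideal_general
    {n d : ℕ} (K : Type*) [Field K]
    (s t : Fin d → Fin n) (hs : Monotone s) (ht : Monotone t) :
    (∏ k : Fin d, Pst K (s k) (t k)) =
      Ideal.span { m : MvPolynomial (Fin n) K |
        ∃ u : Fin n → ℕ,
          (∑ i, u i = d) ∧
          (∀ i : Fin n,
            (Finset.univ.filter (fun k : Fin d => t k ≤ i)).card ≤ ∑ j ∈ Finset.Iic i, u j ∧
            (∑ j ∈ Finset.Iic i, u j) ≤ (Finset.univ.filter (fun k : Fin d => s k ≤ i)).card) ∧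
          m = ∏ i, (X i : MvPolynomial (Fin n) K) ^ u i } := by
  rw [prod_Pst_eq_span]
  congr 1
  ext m
  constructor
  · rintro ⟨g, hg, rfl⟩
    refine ⟨fun i => #{k | g k = i}, ?_, card_filter_le_le_sum_Iic_card_filter_eq hg,
      Fintype.prod_comp_eq_prod_pow_card_filter _ g⟩
    rw [← card_eq_sum_card_fiberwise (t := univ) fun k _ => mem_coe.mpr (mem_univ (g k)),
      card_univ, Fintype.card_fin]
  · rintro ⟨u, hu, hbounds, rfl⟩
    obtain ⟨g, hg, hcard⟩ := exists_card_filter_eq_of_latticePath hs ht hu hbounds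
    refine ⟨g, hg, ?_⟩
    simp only [Fintype.prod_comp_eq_prod_pow_card_filter X g, hcard]

/-- the product `P_{[s_1,t_1]} ⋯ P_{[s_d,t_d]}` (with `s` and `t`
nondecreasing and `s_k ≤ t_k`) is generated by the monomials `x^u` with
`|u| = d` and `#{k : t_k ≤ i} ≤ u_1 + ⋯ + u_i ≤ #{k : s_k ≤ i}` for all `i`. -/
theorem prod_interval_primes_eq_latticePath_ideal
    {n d : ℕ} (K : Type*) [Field K] (hd : 1 ≤ d)
    (s t : Fin d → Fin n) (hs : Monotone s) (ht : Monotone t)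
    (hst : ∀ k, s k ≤ t k) :
    (∏ k : Fin d, Pst K (s k) (t k)) =
      Ideal.span { m : MvPolynomial (Fin n) K |
        ∃ u : Fin n → ℕ,
          (∑ i, u i = d) ∧
          (∀ i : Fin n,
            (Finset.univ.filter (fun k : Fin d => t k ≤ i)).card ≤ ∑ j ∈ Finset.Iic i, u j ∧
            (∑ j ∈ Finset.Iic i, u j) ≤ (Finset.univ.filter (fun k : Fin d => s k ≤ i)).card) ∧
          m = ∏ i, (X i : MvPolynomial (Fin n) K) ^ u i } :=
  prod_interval_primes_eq_latticePath_ideal_general K s t hs ht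
end

section
/- Let B = B(a,b|α,β) ⊆ ℕ^n be a PLP base set. Then B satisfies the left-sided strong symmetric exchange property: for all u, v ∈ B and every index i with u_i < v_i and u_1+⋯+u_{i−1} > v_1+⋯+v_{i−1}, there exists j ≤ i−1 with u_j > v_j such that both u − e_j + e_i ∈ B and v + e_j − e_i ∈ B. Symmetrically, B satisfies the right-sided strong symmetric exchange property: for all u, v ∈ B and every i with u_i < v_i and u_{i+1}+⋯+u_n > v_{i+1}+⋯+v_n, there exists j ≥ i+1 with u_j > v_j such that u − e_j + e_i ∈ B and v + e_j − e_i ∈ B. -/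
/-!
For the left-sided property let `j` be the largest index below `i` with `v j < u j`; it exists
because the sum of `u` over the indices below `i` exceeds that of `v`. Since `u ≤ v` strictly
between `j` and `i`, every prefix sum of `u` ending in `[j, i)` strictly exceeds that of `v`.
Moving a unit of `u` from `j` to `i` lowers exactly these prefix sums of `u` by one, and moving a
unit of `v` from `i` to `j` raises those of `v` by one, so both stay within `[α, β]`; the box
constraints survive because `v j < u j` and `u i < v i`. The right-sided property is the mirror
image with `j` the smallest index above `i`: as `u` and `v` both have total sum `d`, suffix sums
compare in the opposite direction to prefix sums.
-/

open Finset

section SumComparison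

variable {ι M : Type*} [LinearOrder ι] [AddCommMonoid M] {s t : Finset ι} {u v : ι → M}

theorem Finset.exists_lt_forall_gt_le_of_sum_lt [LinearOrder M] [IsOrderedAddMonoid M] (h : ∑ l ∈ s, v l < ∑ l ∈ s, u l) :
    ∃ j ∈ s, v j < u j ∧ ∀ l ∈ s, j < l → u l ≤ v l := by
  have hne : (s.filter fun l => v l < u l).Nonempty := by
    rw [filter_nonempty_iff]
    contrapose! h
    exact sum_le_sum h
  obtain ⟨j, hj, hmax⟩ := (s.filter fun l => v l < u l).exists_maximal hne
  rw [mem_filter] at hj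
  exact ⟨j, hj.1, hj.2, fun l hl hjl =>
    not_lt.mp fun hlt => (hmax (mem_filter.mpr ⟨hl, hlt⟩) hjl.le).not_gt hjl⟩

theorem Finset.exists_lt_forall_lt_le_of_sum_lt [LinearOrder M] [IsOrderedAddMonoid M] (h : ∑ l ∈ s, v l < ∑ l ∈ s, u l) :
    ∃ j ∈ s, v j < u j ∧ ∀ l ∈ s, l < j → u l ≤ v l :=
  Finset.exists_lt_forall_gt_le_of_sum_lt (ι := ιᵒᵈ) h

theorem Finset.sum_lt_sum_of_subset_of_le_on_sdiff [PartialOrder M]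
    [IsOrderedCancelAddMonoid M] (hts : t ⊆ s)
    (h : ∑ l ∈ s, v l < ∑ l ∈ s, u l) (hle : ∀ l ∈ s \ t, u l ≤ v l) :
    ∑ l ∈ t, v l < ∑ l ∈ t, u l := by
  classical
  rw [← sum_sdiff hts, ← sum_sdiff (f := u) hts] at h
  exact lt_of_add_lt_add_left (h.trans_le (by gcongr; exact hle _ ‹_›))

theorem Finset.sum_Iic_add_sum_Ioi [Fintype ι] [LocallyFiniteOrderBot ι]
    [LocallyFiniteOrderTop ι] (f : ι → M) (k : ι) :
    ∑ l ∈ Iic k, f l + ∑ l ∈ Ioi k, f l = ∑ l, f l := by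
  classical
  have hcompl : (Iic k)ᶜ = Ioi k := by ext l; simp
  rw [← hcompl, sum_add_sum_compl]

end SumComparison

def plpBase {n : ℕ} (a b α β : Fin n → ℕ) : Set (Fin n → ℕ) :=
  {u | ∀ i, (a i ≤ u i ∧ u i ≤ b i) ∧
    (α i ≤ ∑ j ∈ Iic i, u j ∧ ∑ j ∈ Iic i, u j ≤ β i)}

namespace PLP

variable {n : ℕ} {a b α β u v : Fin n → ℕ} {p q : Fin n}

theorem exch_add_single (hpq : p ≠ q) (hp : 0 < u p) (l : Fin n) :
    exch u p q l + (Pi.single p 1 : Fin n → ℕ) l = u l + (Pi.single q 1 : Fin n → ℕ) l := by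
  unfold exch
  by_cases hlp : l = p
  · subst hlp; simp [hpq]; omega
  · by_cases hlq : l = q
    · subst hlq; simp [hlp]
    · simp [hlp, hlq]

theorem sum_exch_add_ite (hpq : p ≠ q) (hp : 0 < u p) (s : Finset (Fin n)) :
    ∑ l ∈ s, exch u p q l + (if p ∈ s then 1 else 0) =
      ∑ l ∈ s, u l + (if q ∈ s then 1 else 0) := by
  simpa only [sum_add_distrib, sum_pi_single'] using
    sum_congr rfl fun l _ => exch_add_single hpq hp l

-- `exch u p q` lowers the prefix sums ending in `[p, q)` and raises those ending in `[q, p)`.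
theorem exch_mem_plpBase (hu : u ∈ plpBase a b α β) (hpq : p ≠ q) (hp : a p < u p)
    (hq : u q < b q) (hdown : ∀ k, p ≤ k → ¬q ≤ k → α k < ∑ l ∈ Iic k, u l)
    (hup : ∀ k, q ≤ k → ¬p ≤ k → ∑ l ∈ Iic k, u l < β k) :
    exch u p q ∈ plpBase a b α β := by
  intro k
  obtain ⟨⟨hak, hbk⟩, hαk, hβk⟩ := hu k
  refine ⟨?_, ?_⟩
  · unfold exch
    split_ifs with hkp hkq
    · subst hkp; omega
    · subst hkq; omega
    · omega
  · have key := sum_exch_add_ite hpq (Nat.zero_lt_of_lt hp) (Iic k)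
    simp only [mem_Iic] at key
    by_cases hpk : p ≤ k <;> by_cases hqk : q ≤ k
    · simp only [hpk, hqk, if_true] at key; omega
    · have := hdown k hpk hqk; simp only [hpk, hqk, if_true, if_false] at key; omega
    · have := hup k hqk hpk; simp only [hpk, hqk, if_true, if_false] at key; omega
    · simp only [hpk, hqk, if_false] at key; omega

theorem exch_mem_plpBase_pair (hu : u ∈ plpBase a b α β) (hv : v ∈ plpBase a b α β)
    (hpq : p ≠ q) (hp : v p < u p) (hq : u q < v q)
    (hsum_pq : ∀ k, p ≤ k → ¬q ≤ k → ∑ l ∈ Iic k, v l < ∑ l ∈ Iic k, u l)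
    (hsum_qp : ∀ k, q ≤ k → ¬p ≤ k → ∑ l ∈ Iic k, u l < ∑ l ∈ Iic k, v l) :
    exch u p q ∈ plpBase a b α β ∧ exch v q p ∈ plpBase a b α β :=
  ⟨exch_mem_plpBase hu hpq ((hv p).1.1.trans_lt hp) (hq.trans_le (hv q).1.2)
      (fun k hpk hqk => ((hv k).2.1.trans_lt (hsum_pq k hpk hqk)))
      (fun k hqk hpk => (hsum_qp k hqk hpk).trans_le (hv k).2.2),
    exch_mem_plpBase hv hpq.symm ((hu q).1.1.trans_lt hq) (hp.trans_le (hu p).1.2)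
      (fun k hqk hpk => ((hu k).2.1.trans_lt (hsum_qp k hqk hpk)))
      (fun k hpk hqk => (hsum_pq k hpk hqk).trans_le (hu k).2.2)⟩

theorem sum_eq_of_mem_plpBase [NeZero n] {d : ℕ}
    (hlast : ∀ i : Fin n, (i : ℕ) = n - 1 → α i = d ∧ β i = d) (hu : u ∈ plpBase a b α β) :
    ∑ l, u l = d := by
  let last : Fin n := ⟨n - 1, Nat.sub_one_lt (NeZero.ne n)⟩
  have hIic : Iic last = univ := by
    ext l
    simp only [mem_Iic, mem_univ, iff_true, Fin.le_def, last]
    omega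
  obtain ⟨hα, hβ⟩ := hlast last rfl
  obtain ⟨-, hαu, hβu⟩ := hu last
  rw [hIic] at hαu hβu
  omega

theorem exists_exch_mem_of_sum_Iio_lt (hu : u ∈ plpBase a b α β) (hv : v ∈ plpBase a b α β)
    {i : Fin n} (hi : u i < v i) (hsum : ∑ l ∈ Iio i, v l < ∑ l ∈ Iio i, u l) :
    ∃ j < i, v j < u j ∧ exch u j i ∈ plpBase a b α β ∧ exch v i j ∈ plpBase a b α β := by
  obtain ⟨j, hj, hvu, hmax⟩ := exists_lt_forall_gt_le_of_sum_lt hsum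
  rw [mem_Iio] at hj
  refine ⟨j, hj, hvu, exch_mem_plpBase_pair hu hv hj.ne hvu hi (fun k hjk hik => ?_)
    fun k hik hjk => absurd (hj.le.trans hik) hjk⟩
  refine sum_lt_sum_of_subset_of_le_on_sdiff
    (fun l hl => mem_Iio.mpr ((mem_Iic.mp hl).trans_lt (not_le.mp hik))) hsum fun l hl => ?_
  simp only [mem_sdiff, mem_Iio, mem_Iic, not_le] at hl
  exact hmax l (mem_Iio.mpr hl.1) (hjk.trans_lt hl.2)

theorem exists_exch_mem_of_sum_Ioi_lt (hu : u ∈ plpBase a b α β) (hv : v ∈ plpBase a b α β)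
    (htot : ∑ l, u l = ∑ l, v l) {i : Fin n} (hi : u i < v i)
    (hsum : ∑ l ∈ Ioi i, v l < ∑ l ∈ Ioi i, u l) :
    ∃ j, i < j ∧ v j < u j ∧ exch u j i ∈ plpBase a b α β ∧ exch v i j ∈ plpBase a b α β := by
  obtain ⟨j, hj, hvu, hmin⟩ := exists_lt_forall_lt_le_of_sum_lt hsum
  rw [mem_Ioi] at hj
  refine ⟨j, hj, hvu, exch_mem_plpBase_pair hu hv hj.ne' hvu hi
    (fun k hjk hik => absurd (hj.le.trans hjk) hik) fun k hik hjk => ?_⟩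
  have hsuffix : ∑ l ∈ Ioi k, v l < ∑ l ∈ Ioi k, u l := by
    refine sum_lt_sum_of_subset_of_le_on_sdiff (Ioi_subset_Ioi hik) hsum fun l hl => ?_
    simp only [mem_sdiff, mem_Ioi, not_lt] at hl
    exact hmin l (mem_Ioi.mpr hl.1) (hl.2.trans_lt (not_le.mp hjk))
  have hu_split := sum_Iic_add_sum_Ioi u k
  have hv_split := sum_Iic_add_sum_Ioi v k
  omega

end PLP

theorem PLP_two_sided_SSEP_general {n d : ℕ}
    (a b α β : Fin n → ℕ)
    (hlast : ∀ i : Fin n, (i : ℕ) = n - 1 → α i = d ∧ β i = d)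
    (B : Set (Fin n → ℕ))
    (hB : B = { u : Fin n → ℕ | ∀ i : Fin n,
      (a i ≤ u i ∧ u i ≤ b i) ∧
      (α i ≤ ∑ j ∈ Finset.Iic i, u j ∧ (∑ j ∈ Finset.Iic i, u j) ≤ β i) }) :
    (∀ u ∈ B, ∀ v ∈ B, ∀ i : Fin n, u i < v i →
        (∑ j ∈ Finset.Iio i, v j) < (∑ j ∈ Finset.Iio i, u j) →
        ∃ j : Fin n, j < i ∧ v j < u j ∧ exch u j i ∈ B ∧ exch v i j ∈ B) ∧
    (∀ u ∈ B, ∀ v ∈ B, ∀ i : Fin n, u i < v i →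
        (∑ j ∈ Finset.Ioi i, v j) < (∑ j ∈ Finset.Ioi i, u j) →
        ∃ j : Fin n, i < j ∧ v j < u j ∧ exch u j i ∈ B ∧ exch v i j ∈ B) := by
  subst hB
  refine ⟨fun u hu v hv i => PLP.exists_exch_mem_of_sum_Iio_lt hu hv,
    fun u hu v hv i => ?_⟩
  have : NeZero n := NeZero.of_pos i.pos
  exact PLP.exists_exch_mem_of_sum_Ioi_lt hu hv
    ((PLP.sum_eq_of_mem_plpBase hlast hu).trans (PLP.sum_eq_of_mem_plpBase hlast hv).symm)

/-- a PLP base set satisfies the left-sided and the right-sided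
strong symmetric exchange property. -/
theorem PLP_two_sided_SSEP {n d : ℕ} (hn : 0 < n) (hd : 0 < d)
    (a b α β : Fin n → ℕ)
    (hαm : Monotone α) (hβm : Monotone β)
    (hlast : ∀ i : Fin n, (i : ℕ) = n - 1 → α i = d ∧ β i = d)
    (hαβ : ∀ i, α i ≤ β i)
    (B : Set (Fin n → ℕ))
    (hB : B = { u : Fin n → ℕ | ∀ i : Fin n,
      (a i ≤ u i ∧ u i ≤ b i) ∧
      (α i ≤ ∑ j ∈ Finset.Iic i, u j ∧ (∑ j ∈ Finset.Iic i, u j) ≤ β i) }) :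
    (∀ u ∈ B, ∀ v ∈ B, ∀ i : Fin n, u i < v i →
        (∑ j ∈ Finset.Iio i, v j) < (∑ j ∈ Finset.Iio i, u j) →
        ∃ j : Fin n, j < i ∧ v j < u j ∧ exch u j i ∈ B ∧ exch v i j ∈ B) ∧
    (∀ u ∈ B, ∀ v ∈ B, ∀ i : Fin n, u i < v i →
        (∑ j ∈ Finset.Ioi i, v j) < (∑ j ∈ Finset.Ioi i, u j) →
        ∃ j : Fin n, i < j ∧ v j < u j ∧ exch u j i ∈ B ∧ exch v i j ∈ B) :=
  PLP_two_sided_SSEP_general a b α β hlast B hB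
end

section
/- Let B ⊆ ℕ^4 be the set of bases of a discrete polymatroid on the ground set {1,2,3,4}, with ground set rank function ρ(A) = max{ Σ_{i∈A} u_i : u ∈ B } for A ⊆ {1,2,3,4}. Assume ρ({i}) < min{ρ({i,3}), ρ({i,4})} for i = 1, 2. Then B satisfies the left-sided strong symmetric exchange property if and only if B is a PLP base set, i.e. there exist vectors a, b, α, β ∈ ℕ^4 with α_1 ≤ α_2 ≤ α_3 ≤ α_4 = d, β_1 ≤ β_2 ≤ β_3 ≤ β_4 = d (d being the common modulus of elements of B) and α_i ≤ β_i for all i, such that B = { u ∈ ℕ^4 : a_i ≤ u_i ≤ b_i and α_i ≤ u_1+⋯+u_i ≤ β_i for i = 1,…,4 }. -/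
open Finset

/-- The ground set rank function of the discrete polymatroid with base set `B`. -/
noncomputable def rk (B : Set (Fin 4 → ℕ)) (A : Finset (Fin 4)) : ℕ :=
  sSup { x : ℕ | ∃ u ∈ B, x = ∑ i ∈ A, u i }

private lemma sumIic0 (u : Fin 4 → ℕ) : ∑ j ∈ Iic (0:Fin 4), u j = u 0 := by
  rw [show Iic (0:Fin 4) = {0} by decide, Finset.sum_singleton]

private lemma sumIic1 (u : Fin 4 → ℕ) : ∑ j ∈ Iic (1:Fin 4), u j = u 0 + u 1 := by
  rw [show Iic (1:Fin 4) = {0,1} by decide, Finset.sum_insert (by decide),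
    Finset.sum_singleton]

private lemma sumIic2 (u : Fin 4 → ℕ) : ∑ j ∈ Iic (2:Fin 4), u j = u 0 + u 1 + u 2 := by
  rw [show Iic (2:Fin 4) = {0,1,2} by decide, Finset.sum_insert (by decide),
    Finset.sum_insert (by decide), Finset.sum_singleton]
  omega

private lemma sumIic3 (u : Fin 4 → ℕ) : ∑ j ∈ Iic (3:Fin 4), u j = u 0 + u 1 + u 2 + u 3 := by
  rw [show Iic (3:Fin 4) = univ by decide, Fin.sum_univ_four]

private lemma sumIio0 (u : Fin 4 → ℕ) : ∑ j ∈ Iio (0:Fin 4), u j = 0 := by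
  rw [show Iio (0:Fin 4) = ∅ by decide, Finset.sum_empty]

private lemma sumIio1 (u : Fin 4 → ℕ) : ∑ j ∈ Iio (1:Fin 4), u j = u 0 := by
  rw [show Iio (1:Fin 4) = {0} by decide, Finset.sum_singleton]

private lemma sumIio2 (u : Fin 4 → ℕ) : ∑ j ∈ Iio (2:Fin 4), u j = u 0 + u 1 := by
  rw [show Iio (2:Fin 4) = {0,1} by decide, Finset.sum_insert (by decide),
    Finset.sum_singleton]

private lemma sumIio3 (u : Fin 4 → ℕ) : ∑ j ∈ Iio (3:Fin 4), u j = u 0 + u 1 + u 2 := by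
  rw [show Iio (3:Fin 4) = {0,1,2} by decide, Finset.sum_insert (by decide),
    Finset.sum_insert (by decide), Finset.sum_singleton]
  omega

private lemma attainMin (B : Set (Fin 4 → ℕ)) (hne : B.Nonempty) (f : (Fin 4 → ℕ) → ℕ) :
    ∃ m, (∀ u ∈ B, m ≤ f u) ∧ ∃ u ∈ B, f u = m := by
  refine ⟨sInf (f '' B), fun u hu => Nat.sInf_le ⟨u, hu, rfl⟩, ?_⟩
  obtain ⟨u, hu, h⟩ := Nat.sInf_mem (hne.image f)
  exact ⟨u, hu, h⟩

private lemma attainMax (B : Set (Fin 4 → ℕ)) (hne : B.Nonempty) (f : (Fin 4 → ℕ) → ℕ)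
    (d : ℕ) (hbd : ∀ u ∈ B, f u ≤ d) :
    ∃ m, (∀ u ∈ B, f u ≤ m) ∧ ∃ u ∈ B, f u = m := by
  have hb : BddAbove (f '' B) := ⟨d, by rintro x ⟨u, hu, rfl⟩; exact hbd u hu⟩
  refine ⟨sSup (f '' B), fun u hu => le_csSup hb ⟨u, hu, rfl⟩, ?_⟩
  obtain ⟨u, hu, h⟩ := Nat.sSup_mem (hne.image f) hb
  exact ⟨u, hu, h⟩

private lemma mono4 {x0 x1 x2 x3 : ℕ} (h01 : x0 ≤ x1) (h12 : x1 ≤ x2) (h23 : x2 ≤ x3) :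
    Monotone ![x0, x1, x2, x3] := by
  intro i j hij
  fin_cases i <;> fin_cases j <;> simp_all <;> omega

private lemma fin4_cases (i : Fin 4) : i = 0 ∨ i = 1 ∨ i = 2 ∨ i = 3 := by
  revert i; decide

private lemma fin_lt1 {j : Fin 4} (h : j < 1) : j = 0 := by revert j; decide

private lemma fin_lt2 {j : Fin 4} (h : j < 2) : j = 0 ∨ j = 1 := by revert j; decide

private lemma fin_lt3 {j : Fin 4} (h : j < 3) : j = 0 ∨ j = 1 ∨ j = 2 := by revert j; decide

/-- for a discrete polymatroid on `{1,2,3,4}` with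
`ρ({i}) < min{ρ({i,3}), ρ({i,4})}` for `i = 1, 2`, the left-sided strong
symmetric exchange property holds iff the base set is a PLP base set. -/
theorem leftSSEP_iff_PLP_of_rank_condition
    (B : Set (Fin 4 → ℕ)) (d : ℕ)
    (hfin : B.Finite) (hne : B.Nonempty)
    (hmod : ∀ u ∈ B, ∑ i, u i = d)
    (hex : SymExch B)
    (hrk : ∀ i : Fin 4, i = 0 ∨ i = 1 →
      rk B {i} < min (rk B {i, 2}) (rk B {i, 3})) :
    LeftSSEP B ↔
      ∃ a b α β : Fin 4 → ℕ,
        Monotone α ∧ Monotone β ∧ α 3 = d ∧ β 3 = d ∧ (∀ i, α i ≤ β i) ∧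
        B = { u : Fin 4 → ℕ | ∀ i : Fin 4,
          (a i ≤ u i ∧ u i ≤ b i) ∧
          (α i ≤ ∑ j ∈ Finset.Iic i, u j ∧ (∑ j ∈ Finset.Iic i, u j) ≤ β i) } := by
  have hco : ∀ u ∈ B, u 0 + u 1 + u 2 + u 3 = d := by
    intro u hu; rw [← Fin.sum_univ_four u]; exact hmod u hu
  constructor
  · intro hL
    -- extremal values of coordinates and partial sums, with attainers
    have hbd0 : ∀ u ∈ B, u 0 ≤ d := by intro u hu; have := hco u hu; omega
    have hbd1 : ∀ u ∈ B, u 1 ≤ d := by intro u hu; have := hco u hu; omega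
    have hbd2 : ∀ u ∈ B, u 2 ≤ d := by intro u hu; have := hco u hu; omega
    have hbd3 : ∀ u ∈ B, u 3 ≤ d := by intro u hu; have := hco u hu; omega
    have hbd01 : ∀ u ∈ B, u 0 + u 1 ≤ d := by intro u hu; have := hco u hu; omega
    have hbd012 : ∀ u ∈ B, u 0 + u 1 + u 2 ≤ d := by intro u hu; have := hco u hu; omega
    obtain ⟨a0, ha0f, pa0, hpa0B, hpa0f⟩ := attainMin B hne (fun u => u 0)
    obtain ⟨a1, ha1f, pa1, hpa1B, hpa1f⟩ := attainMin B hne (fun u => u 1)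
    obtain ⟨a2, ha2f, pa2, hpa2B, hpa2f⟩ := attainMin B hne (fun u => u 2)
    obtain ⟨a3, ha3f, pa3, hpa3B, hpa3f⟩ := attainMin B hne (fun u => u 3)
    obtain ⟨b0, hb0f, pb0, hpb0B, hpb0f⟩ := attainMax B hne (fun u => u 0) d hbd0
    obtain ⟨b1, hb1f, pb1, hpb1B, hpb1f⟩ := attainMax B hne (fun u => u 1) d hbd1
    obtain ⟨b2, hb2f, pb2, hpb2B, hpb2f⟩ := attainMax B hne (fun u => u 2) d hbd2
    obtain ⟨b3, hb3f, pb3, hpb3B, hpb3f⟩ := attainMax B hne (fun u => u 3) d hbd3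
    obtain ⟨A1, hA1f, pA1, hpA1B, hpA1f⟩ := attainMin B hne (fun u => u 0 + u 1)
    obtain ⟨A2, hA2f, pA2, hpA2B, hpA2f⟩ := attainMin B hne (fun u => u 0 + u 1 + u 2)
    obtain ⟨B1, hB1f, pB1, hpB1B, hpB1f⟩ := attainMax B hne (fun u => u 0 + u 1) d hbd01
    obtain ⟨B2, hB2f, pB2, hpB2B, hpB2f⟩ := attainMax B hne (fun u => u 0 + u 1 + u 2) d hbd012
    have ha0 : ∀ u ∈ B, a0 ≤ u 0 := ha0f
    have ha1 : ∀ u ∈ B, a1 ≤ u 1 := ha1f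
    have ha2 : ∀ u ∈ B, a2 ≤ u 2 := ha2f
    have ha3 : ∀ u ∈ B, a3 ≤ u 3 := ha3f
    have hb0 : ∀ u ∈ B, u 0 ≤ b0 := hb0f
    have hb1 : ∀ u ∈ B, u 1 ≤ b1 := hb1f
    have hb2 : ∀ u ∈ B, u 2 ≤ b2 := hb2f
    have hb3 : ∀ u ∈ B, u 3 ≤ b3 := hb3f
    have hA1 : ∀ u ∈ B, A1 ≤ u 0 + u 1 := hA1f
    have hA2 : ∀ u ∈ B, A2 ≤ u 0 + u 1 + u 2 := hA2f
    have hB1 : ∀ u ∈ B, u 0 + u 1 ≤ B1 := hB1f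
    have hB2 : ∀ u ∈ B, u 0 + u 1 + u 2 ≤ B2 := hB2f
    have hpa0 : pa0 0 = a0 := hpa0f
    have hpa1 : pa1 1 = a1 := hpa1f
    have hpa2 : pa2 2 = a2 := hpa2f
    have hpa3 : pa3 3 = a3 := hpa3f
    have hpb0 : pb0 0 = b0 := hpb0f
    have hpb1 : pb1 1 = b1 := hpb1f
    have hpb2 : pb2 2 = b2 := hpb2f
    have hpb3 : pb3 3 = b3 := hpb3f
    have hpA1 : pA1 0 + pA1 1 = A1 := hpA1f
    have hpA2 : pA2 0 + pA2 1 + pA2 2 = A2 := hpA2f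
    have hpB1 : pB1 0 + pB1 1 = B1 := hpB1f
    have hpB2 : pB2 0 + pB2 1 + pB2 2 = B2 := hpB2f
    -- M1 : some v attains v 1 = a1 and v 0 = b0 simultaneously
    have hM1 : ∃ v, v ∈ B ∧ v 1 = a1 ∧ v 0 = b0 := by
      obtain ⟨c, hcf, v, hvT, hv0c⟩ :=
        attainMax {v | v ∈ B ∧ v 1 = a1} ⟨pa1, hpa1B, hpa1⟩ (fun v => v 0) d (fun u hu => hbd0 u hu.1)
      obtain ⟨hvB, hv1⟩ := hvT
      have hv0c' : v 0 = c := hv0c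
      rcases eq_or_lt_of_le (hb0 v hvB) with h | h
      · exact ⟨v, hvB, hv1, h⟩
      · exfalso
        obtain ⟨j, hjlt, hE1, hE2⟩ := hex pb0 hpb0B v hvB 0 (by omega)
        rcases fin4_cases j with rfl | rfl | rfl | rfl
        · omega
        · have := ha1 pb0 hpb0B; omega
        · have e1 : exch v 2 0 1 = v 1 := by simp [exch]
          have e0 : exch v 2 0 0 = v 0 + 1 := by simp [exch]
          have hle : exch v 2 0 0 ≤ c := hcf _ ⟨hE2, by rw [e1, hv1]⟩
          omega
        · have e1 : exch v 3 0 1 = v 1 := by simp [exch]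
          have e0 : exch v 3 0 0 = v 0 + 1 := by simp [exch]
          have hle : exch v 3 0 0 ≤ c := hcf _ ⟨hE2, by rw [e1, hv1]⟩
          omega
    -- M1' : some v attains v 0 = a0 and v 1 = b1 simultaneously
    have hM1' : ∃ v, v ∈ B ∧ v 0 = a0 ∧ v 1 = b1 := by
      obtain ⟨c, hcf, v, hvT, hv1c⟩ :=
        attainMax {v | v ∈ B ∧ v 0 = a0} ⟨pa0, hpa0B, hpa0⟩ (fun v => v 1) d (fun u hu => hbd1 u hu.1)
      obtain ⟨hvB, hv0⟩ := hvT
      have hv1c' : v 1 = c := hv1c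
      rcases eq_or_lt_of_le (hb1 v hvB) with h | h
      · exact ⟨v, hvB, hv0, h⟩
      · exfalso
        obtain ⟨j, hjlt, hE1, hE2⟩ := hex pb1 hpb1B v hvB 1 (by omega)
        rcases fin4_cases j with rfl | rfl | rfl | rfl
        · have := ha0 pb1 hpb1B; omega
        · omega
        · have e0 : exch v 2 1 0 = v 0 := by simp [exch]
          have e1 : exch v 2 1 1 = v 1 + 1 := by simp [exch]
          have hle : exch v 2 1 1 ≤ c := hcf _ ⟨hE2, by rw [e0, hv0]⟩
          omega
        · have e0 : exch v 3 1 0 = v 0 := by simp [exch]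
          have e1 : exch v 3 1 1 = v 1 + 1 := by simp [exch]
          have hle : exch v 3 1 1 ≤ c := hcf _ ⟨hE2, by rw [e0, hv0]⟩
          omega
    -- M2 : some v attains v 2 = a2 and v 0 + v 1 = B1 simultaneously
    have hM2 : ∃ v, v ∈ B ∧ v 2 = a2 ∧ v 0 + v 1 = B1 := by
      obtain ⟨c, hcf, v, hvT, hv2c⟩ :=
        attainMin {v | v ∈ B ∧ v 0 + v 1 = B1} ⟨pB1, hpB1B, hpB1⟩ (fun v => v 2)
      obtain ⟨hvB, hvs⟩ := hvT
      have hv2c' : v 2 = c := hv2c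
      rcases eq_or_lt_of_le (ha2 v hvB) with h | h
      · exact ⟨v, hvB, h.symm, hvs⟩
      · exfalso
        obtain ⟨j, hjlt, hE1, hE2⟩ := hex v hvB pa2 hpa2B 2 (by omega)
        rcases fin4_cases j with rfl | rfl | rfl | rfl
        · have e0 : exch v 2 0 0 = v 0 + 1 := by simp [exch]
          have e1 : exch v 2 0 1 = v 1 := by simp [exch]
          have hle := hB1 _ hE1
          rw [e0, e1] at hle
          omega
        · have e0 : exch v 2 1 0 = v 0 := by simp [exch]
          have e1 : exch v 2 1 1 = v 1 + 1 := by simp [exch]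
          have hle := hB1 _ hE1
          rw [e0, e1] at hle
          omega
        · omega
        · have e0 : exch v 2 3 0 = v 0 := by simp [exch]
          have e1 : exch v 2 3 1 = v 1 := by simp [exch]
          have e2 : exch v 2 3 2 = v 2 - 1 := by simp [exch]
          have hle : c ≤ exch v 2 3 2 := hcf _ ⟨hE1, by rw [e0, e1]; exact hvs⟩
          omega
    -- M2' : some v attains v 2 = b2 and v 0 + v 1 = A1 simultaneously
    have hM2' : ∃ v, v ∈ B ∧ v 2 = b2 ∧ v 0 + v 1 = A1 := by
      obtain ⟨c, hcf, v, hvT, hv2c⟩ :=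
        attainMax {v | v ∈ B ∧ v 0 + v 1 = A1} ⟨pA1, hpA1B, hpA1⟩ (fun v => v 2) d (fun u hu => hbd2 u hu.1)
      obtain ⟨hvB, hvs⟩ := hvT
      have hv2c' : v 2 = c := hv2c
      rcases eq_or_lt_of_le (hb2 v hvB) with h | h
      · exact ⟨v, hvB, h, hvs⟩
      · exfalso
        obtain ⟨j, hjlt, hE1, hE2⟩ := hex pb2 hpb2B v hvB 2 (by omega)
        rcases fin4_cases j with rfl | rfl | rfl | rfl
        · have e0 : exch v 0 2 0 = v 0 - 1 := by simp [exch]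
          have e1 : exch v 0 2 1 = v 1 := by simp [exch]
          have hle := hA1 _ hE2
          rw [e0, e1] at hle
          omega
        · have e0 : exch v 1 2 0 = v 0 := by simp [exch]
          have e1 : exch v 1 2 1 = v 1 - 1 := by simp [exch]
          have hle := hA1 _ hE2
          rw [e0, e1] at hle
          omega
        · omega
        · have e0 : exch v 3 2 0 = v 0 := by simp [exch]
          have e1 : exch v 3 2 1 = v 1 := by simp [exch]
          have e2 : exch v 3 2 2 = v 2 + 1 := by simp [exch]
          have hle : exch v 3 2 2 ≤ c := hcf _ ⟨hE2, by rw [e0, e1]; exact hvs⟩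
          omega
    -- elementary moves
    have mvx_up : ∀ u, u ∈ B → u 0 < b0 → a1 < u 1 →
        ∃ w, w ∈ B ∧ w 0 = u 0 + 1 ∧ w 1 + 1 = u 1 ∧ w 2 = u 2 ∧ w 3 = u 3 := by
      intro u hu h0 h1
      obtain ⟨v, hvB, hv1, hv0⟩ := hM1
      obtain ⟨j, hjlt, hujv, hE1, hE2⟩ := hL u hu v hvB 1 (by omega)
        (by rw [sumIio1, sumIio1]; omega)
      obtain rfl := fin_lt1 hjlt
      exact ⟨exch u 1 0, hE1, by simp [exch] <;> omega, by simp [exch] <;> omega,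
        by simp [exch] <;> omega, by simp [exch] <;> omega⟩
    have mvx_dn : ∀ u, u ∈ B → a0 < u 0 → u 1 < b1 →
        ∃ w, w ∈ B ∧ w 0 + 1 = u 0 ∧ w 1 = u 1 + 1 ∧ w 2 = u 2 ∧ w 3 = u 3 := by
      intro u hu h0 h1
      obtain ⟨v, hvB, hv0, hv1⟩ := hM1'
      obtain ⟨j, hjlt, hujv, hE1, hE2⟩ := hL v hvB u hu 1 (by omega)
        (by rw [sumIio1, sumIio1]; omega)
      obtain rfl := fin_lt1 hjlt
      exact ⟨exch u 0 1, hE2, by simp [exch] <;> omega, by simp [exch] <;> omega,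
        by simp [exch] <;> omega, by simp [exch] <;> omega⟩
    have mvs_up : ∀ u, u ∈ B → u 0 + u 1 < B1 → a2 < u 2 →
        ∃ w, w ∈ B ∧ w 0 + w 1 = u 0 + u 1 + 1 ∧ w 2 + 1 = u 2 ∧ w 3 = u 3 := by
      intro u hu hs h2
      obtain ⟨v, hvB, hv2, hvs⟩ := hM2
      obtain ⟨j, hjlt, hujv, hE1, hE2⟩ := hL u hu v hvB 2 (by omega)
        (by rw [sumIio2, sumIio2]; omega)
      rcases fin_lt2 hjlt with rfl | rfl
      · exact ⟨exch u 2 0, hE1, by simp [exch] <;> omega, by simp [exch] <;> omega,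
          by simp [exch] <;> omega⟩
      · exact ⟨exch u 2 1, hE1, by simp [exch] <;> omega, by simp [exch] <;> omega,
          by simp [exch] <;> omega⟩
    have mvs_dn : ∀ u, u ∈ B → A1 < u 0 + u 1 → u 2 < b2 →
        ∃ w, w ∈ B ∧ w 0 + w 1 + 1 = u 0 + u 1 ∧ w 2 = u 2 + 1 ∧ w 3 = u 3 := by
      intro u hu hs h2
      obtain ⟨v, hvB, hv2, hvs⟩ := hM2'
      obtain ⟨j, hjlt, hujv, hE1, hE2⟩ := hL v hvB u hu 2 (by omega)
        (by rw [sumIio2, sumIio2]; omega)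
      rcases fin_lt2 hjlt with rfl | rfl
      · exact ⟨exch u 0 2, hE2, by simp [exch] <;> omega, by simp [exch] <;> omega,
          by simp [exch] <;> omega⟩
      · exact ⟨exch u 1 2, hE2, by simp [exch] <;> omega, by simp [exch] <;> omega,
          by simp [exch] <;> omega⟩
    have mvt_up : ∀ u, u ∈ B → u 0 + u 1 + u 2 < B2 →
        ∃ w, w ∈ B ∧ w 0 + w 1 + w 2 = u 0 + u 1 + u 2 + 1 := by
      intro u hu hs
      have hdu := hco u hu
      have hdv := hco pB2 hpB2B
      obtain ⟨j, hjlt, hujv, hE1, hE2⟩ := hL u hu pB2 hpB2B 3 (by omega)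
        (by rw [sumIio3, sumIio3]; omega)
      rcases fin_lt3 hjlt with rfl | rfl | rfl
      · exact ⟨exch u 3 0, hE1, by simp [exch] <;> omega⟩
      · exact ⟨exch u 3 1, hE1, by simp [exch] <;> omega⟩
      · exact ⟨exch u 3 2, hE1, by simp [exch] <;> omega⟩
    have mvt_dn : ∀ u, u ∈ B → A2 < u 0 + u 1 + u 2 →
        ∃ w, w ∈ B ∧ w 0 + w 1 + w 2 + 1 = u 0 + u 1 + u 2 := by
      intro u hu hs
      have hdu := hco u hu
      have hdv := hco pA2 hpA2B
      obtain ⟨j, hjlt, hujv, hE1, hE2⟩ := hL pA2 hpA2B u hu 3 (by omega)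
        (by rw [sumIio3, sumIio3]; omega)
      rcases fin_lt3 hjlt with rfl | rfl | rfl
      · exact ⟨exch u 0 3, hE2, by simp [exch] <;> omega⟩
      · exact ⟨exch u 1 3, hE2, by simp [exch] <;> omega⟩
      · exact ⟨exch u 2 3, hE2, by simp [exch] <;> omega⟩
    -- reach any admissible total on the first three coordinates
    have reach_t : ∀ t, A2 ≤ t → t ≤ B2 → ∃ u, u ∈ B ∧ u 0 + u 1 + u 2 = t := by
      have up : ∀ k, ∀ u, u ∈ B → u 0 + u 1 + u 2 + k ≤ B2 →
          ∃ z, z ∈ B ∧ z 0 + z 1 + z 2 = u 0 + u 1 + u 2 + k := by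
        intro k
        induction k with
        | zero => exact fun u hu _ => ⟨u, hu, by omega⟩
        | succ n ih =>
          intro u hu h
          obtain ⟨w, hw, hws⟩ := mvt_up u hu (by omega)
          obtain ⟨z, hz, hzs⟩ := ih w hw (by omega)
          exact ⟨z, hz, by omega⟩
      intro t h1 h2
      obtain ⟨z, hz, hzs⟩ := up (t - A2) pA2 hpA2B (by omega)
      exact ⟨z, hz, by omega⟩
    -- reach any admissible pair of partial sums
    have reach_st : ∀ s t, A1 ≤ s → s ≤ B1 → A2 ≤ t → t ≤ B2 → a2 + s ≤ t → t ≤ b2 + s →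
        ∃ u, u ∈ B ∧ u 0 + u 1 = s ∧ u 0 + u 1 + u 2 = t := by
      intro s t hA1s hsB1 hA2t htB2 hast htbs
      have sup : ∀ k, ∀ u, u ∈ B → u 0 + u 1 + u 2 = t → u 0 + u 1 + k = s →
          ∃ z, z ∈ B ∧ z 0 + z 1 = s ∧ z 0 + z 1 + z 2 = t := by
        intro k
        induction k with
        | zero => exact fun u hu ht hs => ⟨u, hu, by omega, ht⟩
        | succ n ih =>
          intro u hu ht hs
          obtain ⟨w, hw, hw1, hw2, hw3⟩ := mvs_up u hu (by omega) (by omega)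
          exact ih w hw (by omega) (by omega)
      have sdn : ∀ k, ∀ u, u ∈ B → u 0 + u 1 + u 2 = t → u 0 + u 1 = s + k →
          ∃ z, z ∈ B ∧ z 0 + z 1 = s ∧ z 0 + z 1 + z 2 = t := by
        intro k
        induction k with
        | zero => exact fun u hu ht hs => ⟨u, hu, by omega, ht⟩
        | succ n ih =>
          intro u hu ht hs
          obtain ⟨w, hw, hw1, hw2, hw3⟩ := mvs_dn u hu (by omega) (by omega)
          exact ih w hw (by omega) (by omega)
      obtain ⟨u, hu, hut⟩ := reach_t t hA2t htB2
      rcases le_total (u 0 + u 1) s with h | h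
      · exact sup (s - (u 0 + u 1)) u hu hut (by omega)
      · exact sdn ((u 0 + u 1) - s) u hu hut (by omega)
    -- additionally reach any admissible first coordinate
    have reach_x : ∀ x s t, a0 ≤ x → x ≤ b0 → a1 + x ≤ s → s ≤ b1 + x →
        (∃ u, u ∈ B ∧ u 0 + u 1 = s ∧ u 0 + u 1 + u 2 = t) →
        ∃ u, u ∈ B ∧ u 0 = x ∧ u 0 + u 1 = s ∧ u 0 + u 1 + u 2 = t := by
      intro x s t hax hxb has hsb hst
      obtain ⟨u, hu, hus, hut⟩ := hst
      have xup : ∀ k, ∀ u, u ∈ B → u 0 + u 1 = s → u 0 + u 1 + u 2 = t → u 0 + k = x →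
          ∃ z, z ∈ B ∧ z 0 = x ∧ z 0 + z 1 = s ∧ z 0 + z 1 + z 2 = t := by
        intro k
        induction k with
        | zero => exact fun u hu hs2 ht h0 => ⟨u, hu, by omega, hs2, ht⟩
        | succ n ih =>
          intro u hu hs2 ht h0
          obtain ⟨w, hw, hw0, hw1, hw2, hw3⟩ := mvx_up u hu (by omega) (by omega)
          exact ih w hw (by omega) (by omega) (by omega)
      have xdn : ∀ k, ∀ u, u ∈ B → u 0 + u 1 = s → u 0 + u 1 + u 2 = t → u 0 = x + k →
          ∃ z, z ∈ B ∧ z 0 = x ∧ z 0 + z 1 = s ∧ z 0 + z 1 + z 2 = t := by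
        intro k
        induction k with
        | zero => exact fun u hu hs2 ht h0 => ⟨u, hu, by omega, hs2, ht⟩
        | succ n ih =>
          intro u hu hs2 ht h0
          obtain ⟨w, hw, hw0, hw1, hw2, hw3⟩ := mvx_dn u hu (by omega) (by omega)
          exact ih w hw (by omega) (by omega) (by omega)
      rcases le_total (u 0) x with h | h
      · exact xup (x - u 0) u hu hus hut (by omega)
      · exact xdn (u 0 - x) u hu hus hut (by omega)
    -- assemble the PLP description
    refine ⟨![a0, a1, a2, a3], ![b0, b1, b2, b3], ![a0, A1, A2, d], ![b0, B1, B2, d],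
      ?_, ?_, rfl, rfl, ?_, ?_⟩
    · refine mono4 ?_ ?_ ?_
      · have h1 := ha0 pA1 hpA1B; omega
      · have h1 := hA1 pA2 hpA2B; omega
      · have h1 := hco pA2 hpA2B; omega
    · refine mono4 ?_ ?_ ?_
      · have h1 := hB1 pb0 hpb0B; omega
      · have h1 := hB2 pB1 hpB1B; omega
      · have h1 := hco pB2 hpB2B; omega
    · intro i
      rcases fin4_cases i with rfl | rfl | rfl | rfl
      · show a0 ≤ b0
        have h1 := hb0 pa0 hpa0B; omega
      · show A1 ≤ B1
        have h1 := hA1 pa0 hpa0B; have h2 := hB1 pa0 hpa0B; omega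
      · show A2 ≤ B2
        have h1 := hA2 pa0 hpa0B; have h2 := hB2 pa0 hpa0B; omega
      · show (d : ℕ) ≤ d
        exact le_rfl
    · ext w
      simp only [Set.mem_setOf_eq]
      constructor
      · intro hw i
        rcases fin4_cases i with rfl | rfl | rfl | rfl
        · rw [sumIic0]; exact ⟨⟨ha0 w hw, hb0 w hw⟩, ha0 w hw, hb0 w hw⟩
        · rw [sumIic1]; exact ⟨⟨ha1 w hw, hb1 w hw⟩, hA1 w hw, hB1 w hw⟩
        · rw [sumIic2]; exact ⟨⟨ha2 w hw, hb2 w hw⟩, hA2 w hw, hB2 w hw⟩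
        · rw [sumIic3]
          refine ⟨⟨ha3 w hw, hb3 w hw⟩, ?_, ?_⟩
          · show d ≤ w 0 + w 1 + w 2 + w 3
            have := hco w hw; omega
          · show w 0 + w 1 + w 2 + w 3 ≤ d
            have := hco w hw; omega
      · intro hw
        have h0 := hw 0; rw [sumIic0] at h0
        have h1 := hw 1; rw [sumIic1] at h1
        have h2 := hw 2; rw [sumIic2] at h2
        have h3 := hw 3; rw [sumIic3] at h3
        have g0 : (a0 ≤ w 0 ∧ w 0 ≤ b0) ∧ (a0 ≤ w 0 ∧ w 0 ≤ b0) := h0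
        have g1 : (a1 ≤ w 1 ∧ w 1 ≤ b1) ∧ (A1 ≤ w 0 + w 1 ∧ w 0 + w 1 ≤ B1) := h1
        have g2 : (a2 ≤ w 2 ∧ w 2 ≤ b2) ∧
            (A2 ≤ w 0 + w 1 + w 2 ∧ w 0 + w 1 + w 2 ≤ B2) := h2
        have g3 : (a3 ≤ w 3 ∧ w 3 ≤ b3) ∧
            (d ≤ w 0 + w 1 + w 2 + w 3 ∧ w 0 + w 1 + w 2 + w 3 ≤ d) := h3
        obtain ⟨⟨gw0a, gw0b⟩, -⟩ := g0
        obtain ⟨⟨gw1a, gw1b⟩, gs1a, gs1b⟩ := g1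
        obtain ⟨⟨gw2a, gw2b⟩, gs2a, gs2b⟩ := g2
        obtain ⟨⟨gw3a, gw3b⟩, gs3a, gs3b⟩ := g3
        obtain ⟨u, hu, hu0, hus, hut⟩ :=
          reach_x (w 0) (w 0 + w 1) (w 0 + w 1 + w 2) gw0a gw0b (by omega) (by omega)
            (reach_st _ _ gs1a gs1b gs2a gs2b (by omega) (by omega))
        have hdu := hco u hu
        have he : u = w := by
          funext l
          rcases fin4_cases l with rfl | rfl | rfl | rfl
          · omega
          · omega
          · omega
          · omega
        rw [he] at hu
        exact hu
  · rintro ⟨a, b, α, β, hαm, hβm, hα3, hβ3, hαβ, hB⟩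
    intro u hu v hv i hvu hsum
    rw [hB] at hu hv
    have hu0 : (a 0 ≤ u 0 ∧ u 0 ≤ b 0) ∧
        (α 0 ≤ u 0 ∧ u 0 ≤ β 0) := by have := hu 0; rwa [sumIic0] at this
    have hu1 : (a 1 ≤ u 1 ∧ u 1 ≤ b 1) ∧
        (α 1 ≤ u 0 + u 1 ∧ u 0 + u 1 ≤ β 1) := by have := hu 1; rwa [sumIic1] at this
    have hu2 : (a 2 ≤ u 2 ∧ u 2 ≤ b 2) ∧
        (α 2 ≤ u 0 + u 1 + u 2 ∧ u 0 + u 1 + u 2 ≤ β 2) := by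
      have := hu 2; rwa [sumIic2] at this
    have hu3 : (a 3 ≤ u 3 ∧ u 3 ≤ b 3) ∧
        (α 3 ≤ u 0 + u 1 + u 2 + u 3 ∧ u 0 + u 1 + u 2 + u 3 ≤ β 3) := by
      have := hu 3; rwa [sumIic3] at this
    have hv0 : (a 0 ≤ v 0 ∧ v 0 ≤ b 0) ∧
        (α 0 ≤ v 0 ∧ v 0 ≤ β 0) := by have := hv 0; rwa [sumIic0] at this
    have hv1 : (a 1 ≤ v 1 ∧ v 1 ≤ b 1) ∧
        (α 1 ≤ v 0 + v 1 ∧ v 0 + v 1 ≤ β 1) := by have := hv 1; rwa [sumIic1] at this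
    have hv2 : (a 2 ≤ v 2 ∧ v 2 ≤ b 2) ∧
        (α 2 ≤ v 0 + v 1 + v 2 ∧ v 0 + v 1 + v 2 ≤ β 2) := by
      have := hv 2; rwa [sumIic2] at this
    have hv3 : (a 3 ≤ v 3 ∧ v 3 ≤ b 3) ∧
        (α 3 ≤ v 0 + v 1 + v 2 + v 3 ∧ v 0 + v 1 + v 2 + v 3 ≤ β 3) := by
      have := hv 3; rwa [sumIic3] at this
    obtain ⟨⟨hua0, hub0⟩, hual0, hube0⟩ := hu0
    obtain ⟨⟨hua1, hub1⟩, hual1, hube1⟩ := hu1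
    obtain ⟨⟨hua2, hub2⟩, hual2, hube2⟩ := hu2
    obtain ⟨⟨hua3, hub3⟩, hual3, hube3⟩ := hu3
    obtain ⟨⟨hva0, hvb0⟩, hval0, hvbe0⟩ := hv0
    obtain ⟨⟨hva1, hvb1⟩, hval1, hvbe1⟩ := hv1
    obtain ⟨⟨hva2, hvb2⟩, hval2, hvbe2⟩ := hv2
    obtain ⟨⟨hva3, hvb3⟩, hval3, hvbe3⟩ := hv3
    -- helper to prove membership of a modified vector
    have mem_of : ∀ z : Fin 4 → ℕ,
        (a 0 ≤ z 0 ∧ z 0 ≤ b 0) → (a 1 ≤ z 1 ∧ z 1 ≤ b 1) →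
        (a 2 ≤ z 2 ∧ z 2 ≤ b 2) → (a 3 ≤ z 3 ∧ z 3 ≤ b 3) →
        (α 0 ≤ z 0 ∧ z 0 ≤ β 0) → (α 1 ≤ z 0 + z 1 ∧ z 0 + z 1 ≤ β 1) →
        (α 2 ≤ z 0 + z 1 + z 2 ∧ z 0 + z 1 + z 2 ≤ β 2) →
        (α 3 ≤ z 0 + z 1 + z 2 + z 3 ∧ z 0 + z 1 + z 2 + z 3 ≤ β 3) →
        z ∈ B := by
      intro z h0 h1 h2 h3 g0 g1 g2 g3
      rw [hB]
      intro i
      rcases fin4_cases i with rfl | rfl | rfl | rfl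
      · rw [sumIic0]; exact ⟨h0, g0⟩
      · rw [sumIic1]; exact ⟨h1, g1⟩
      · rw [sumIic2]; exact ⟨h2, g2⟩
      · rw [sumIic3]; exact ⟨h3, g3⟩
    rcases fin4_cases i with rfl | rfl | rfl | rfl
    · rw [sumIio0, sumIio0] at hsum; omega
    · rw [sumIio1, sumIio1] at hsum
      refine ⟨0, by decide, hsum, ?_, ?_⟩
      · exact mem_of _ (by simp [exch]; omega) (by simp [exch]; omega)
          (by simp [exch]; omega) (by simp [exch]; omega) (by simp [exch]; omega)
          (by simp [exch]; omega) (by simp [exch]; omega) (by simp [exch]; omega)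
      · exact mem_of _ (by simp [exch]; omega) (by simp [exch]; omega)
          (by simp [exch]; omega) (by simp [exch]; omega) (by simp [exch]; omega)
          (by simp [exch]; omega) (by simp [exch]; omega) (by simp [exch]; omega)
    · rw [sumIio2, sumIio2] at hsum
      by_cases h1 : u 1 < v 1
      · refine ⟨1, by decide, h1, ?_, ?_⟩
        · exact mem_of _ (by simp [exch]; omega) (by simp [exch]; omega)
            (by simp [exch]; omega) (by simp [exch]; omega) (by simp [exch]; omega)
            (by simp [exch]; omega) (by simp [exch]; omega) (by simp [exch]; omega)
        · exact mem_of _ (by simp [exch]; omega) (by simp [exch]; omega)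
            (by simp [exch]; omega) (by simp [exch]; omega) (by simp [exch]; omega)
            (by simp [exch]; omega) (by simp [exch]; omega) (by simp [exch]; omega)
      · refine ⟨0, by decide, by omega, ?_, ?_⟩
        · exact mem_of _ (by simp [exch]; omega) (by simp [exch]; omega)
            (by simp [exch]; omega) (by simp [exch]; omega) (by simp [exch]; omega)
            (by simp [exch]; omega) (by simp [exch]; omega) (by simp [exch]; omega)
        · exact mem_of _ (by simp [exch]; omega) (by simp [exch]; omega)
            (by simp [exch]; omega) (by simp [exch]; omega) (by simp [exch]; omega)
            (by simp [exch]; omega) (by simp [exch]; omega) (by simp [exch]; omega)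
    · rw [sumIio3, sumIio3] at hsum
      by_cases h2 : u 2 < v 2
      · refine ⟨2, by decide, h2, ?_, ?_⟩
        · exact mem_of _ (by simp [exch]; omega) (by simp [exch]; omega)
            (by simp [exch]; omega) (by simp [exch]; omega) (by simp [exch]; omega)
            (by simp [exch]; omega) (by simp [exch]; omega) (by simp [exch]; omega)
        · exact mem_of _ (by simp [exch]; omega) (by simp [exch]; omega)
            (by simp [exch]; omega) (by simp [exch]; omega) (by simp [exch]; omega)
            (by simp [exch]; omega) (by simp [exch]; omega) (by simp [exch]; omega)
      · by_cases h1 : u 1 < v 1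
        · refine ⟨1, by decide, h1, ?_, ?_⟩
          · exact mem_of _ (by simp [exch]; omega) (by simp [exch]; omega)
              (by simp [exch]; omega) (by simp [exch]; omega) (by simp [exch]; omega)
              (by simp [exch]; omega) (by simp [exch]; omega) (by simp [exch]; omega)
          · exact mem_of _ (by simp [exch]; omega) (by simp [exch]; omega)
              (by simp [exch]; omega) (by simp [exch]; omega) (by simp [exch]; omega)
              (by simp [exch]; omega) (by simp [exch]; omega) (by simp [exch]; omega)
        · refine ⟨0, by decide, by omega, ?_, ?_⟩
          · exact mem_of _ (by simp [exch]; omega) (by simp [exch]; omega)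
              (by simp [exch]; omega) (by simp [exch]; omega) (by simp [exch]; omega)
              (by simp [exch]; omega) (by simp [exch]; omega) (by simp [exch]; omega)
          · exact mem_of _ (by simp [exch]; omega) (by simp [exch]; omega)
              (by simp [exch]; omega) (by simp [exch]; omega) (by simp [exch]; omega)
              (by simp [exch]; omega) (by simp [exch]; omega) (by simp [exch]; omega)
end

section
/- Let B ⊆ ℕ^n be the set of bases of a discrete polymatroid, and let a, b, c, d be indices in [1,n] with c < a < b < d. Let C = { e_i + e_j : a ≤ i ≤ b, c ≤ j ≤ d } ⊆ ℕ^n (the exponent vectors of the generators of the transversal ideal P_{[a,b]}P_{[c,d]}). Then the Minkowski sum B + C = { u + v : u ∈ B, v ∈ C } satisfies neither the right-sided nor the left-sided strong symmetric exchange property. -/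
open Finset

/-!
Pick `u₀ ∈ B` maximizing `u c + u d`. Every element of `B + C` is `u + e_i + e_j` with
`i ∈ [a, b]`, hence `i ∉ {c, d}`, so its `c`- and `d`-coordinates sum to at most
`u₀ c + u₀ d + 1`; in particular `u₀ + e_c + e_d ∉ B + C`. Now compare
`U = u₀ + e_b + e_c` and `V = u₀ + e_a + e_d`. For the right-sided property at `i = b` the only
admissible `j > b` is `d`, and exchanging `b → d` in `U` gives `u₀ + e_c + e_d`; for the
left-sided property at `i = a` (with the roles of `U` and `V` swapped) the only admissible
`j < a` is `c`, and exchanging `a → c` in `V` gives `u₀ + e_d + e_c`.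
-/

open scoped Pointwise

section UnitPair

variable {n : ℕ}

def unitPair (i j : Fin n) : Fin n → ℕ :=
  fun l => (if l = i then 1 else 0) + (if l = j then 1 else 0)

lemma unitPair_comm (i j : Fin n) : unitPair i j = unitPair j i := by
  funext l
  exact add_comm _ _

lemma sum_unitPair (s : Finset (Fin n)) (i j : Fin n) :
    ∑ l ∈ s, unitPair i j l = (if i ∈ s then 1 else 0) + (if j ∈ s then 1 else 0) := by
  simp only [unitPair, sum_add_distrib, sum_ite_eq']

lemma unitPair_apply_add_apply_le {i c d : Fin n} (j : Fin n) (hic : i ≠ c) (hid : i ≠ d)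
    (hcd : c ≠ d) : unitPair i j c + unitPair i j d ≤ 1 := by
  simp only [unitPair, if_neg hic.symm, if_neg hid.symm]
  split_ifs <;> simp_all

lemma exch_add_unitPair (u : Fin n → ℕ) {p r : Fin n} (q : Fin n) (hpr : p ≠ r) :
    exch (u + unitPair p q) p r = u + unitPair q r := by
  funext l
  simp only [exch, unitPair, Pi.add_apply]
  split_ifs <;> subst_vars <;> simp_all

section MinkowskiSum

variable {B C : Set (Fin n → ℕ)} {c d : Fin n} {u₀ : Fin n → ℕ}

lemma add_unitPair_not_mem_add (hcd : c ≠ d)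
    (hmax : ∀ u ∈ B, u c + u d ≤ u₀ c + u₀ d) (hC : ∀ v ∈ C, v c + v d ≤ 1) :
    u₀ + unitPair c d ∉ B + C := by
  rintro ⟨u, hu, v, hv, huv⟩
  have hc := congrFun huv c
  have hd := congrFun huv d
  simp only [Pi.add_apply, unitPair, if_neg hcd, if_neg hcd.symm, ↓reduceIte] at hc hd
  have := hmax u hu
  have := hC v hv
  omega

lemma not_rightSSEP_add {a b : Fin n} (hcb : c < b) (hab : a < b) (hbd : b < d)
    (hu₀ : u₀ ∈ B) (hmax : ∀ u ∈ B, u c + u d ≤ u₀ c + u₀ d)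
    (hbcC : unitPair b c ∈ C) (hadC : unitPair a d ∈ C) (hC : ∀ v ∈ C, v c + v d ≤ 1) :
    ¬ RightSSEP (B + C) := by
  intro h
  have hV_lt_U : (u₀ + unitPair a d) b < (u₀ + unitPair b c) b := by
    simp [unitPair, hab.ne', hbd.ne, hcb.ne']
  have htail : ∑ l ∈ Ioi b, (u₀ + unitPair b c) l < ∑ l ∈ Ioi b, (u₀ + unitPair a d) l := by
    simp only [Pi.add_apply, sum_add_distrib, sum_unitPair, mem_Ioi]
    simp [lt_asymm hcb, lt_asymm hab, hbd]
  obtain ⟨j, hbj, hlt, hexch, -⟩ :=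
    h _ (Set.add_mem_add hu₀ hbcC) _ (Set.add_mem_add hu₀ hadC) b hV_lt_U htail
  obtain rfl : j = d := by
    by_contra hjd
    simp [unitPair, hbj.ne', (hcb.trans hbj).ne', (hab.trans hbj).ne', hjd] at hlt
  rw [exch_add_unitPair _ _ hbd.ne] at hexch
  exact add_unitPair_not_mem_add (hcb.trans hbd).ne hmax hC hexch

lemma not_leftSSEP_add {a b : Fin n} (hca : c < a) (hab : a < b) (had : a < d)
    (hu₀ : u₀ ∈ B) (hmax : ∀ u ∈ B, u c + u d ≤ u₀ c + u₀ d)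
    (hbcC : unitPair b c ∈ C) (hadC : unitPair a d ∈ C) (hC : ∀ v ∈ C, v c + v d ≤ 1) :
    ¬ LeftSSEP (B + C) := by
  intro h
  have hU_lt_V : (u₀ + unitPair b c) a < (u₀ + unitPair a d) a := by
    simp [unitPair, hab.ne, had.ne, hca.ne']
  have hhead : ∑ l ∈ Iio a, (u₀ + unitPair a d) l < ∑ l ∈ Iio a, (u₀ + unitPair b c) l := by
    simp only [Pi.add_apply, sum_add_distrib, sum_unitPair, mem_Iio]
    simp [lt_asymm hab, lt_asymm had, hca]
  obtain ⟨j, hja, hlt, hexch, -⟩ :=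
    h _ (Set.add_mem_add hu₀ hadC) _ (Set.add_mem_add hu₀ hbcC) a hU_lt_V hhead
  obtain rfl : j = c := by
    by_contra hjc
    simp [unitPair, hja.ne, (hja.trans hab).ne, (hja.trans had).ne, hjc] at hlt
  rw [exch_add_unitPair _ _ hca.ne', unitPair_comm] at hexch
  exact add_unitPair_not_mem_add (hca.trans had).ne hmax hC hexch

end MinkowskiSum

end UnitPair

theorem minkowski_sum_not_oneSided_SSEP_general
    {n : ℕ} (B : Set (Fin n → ℕ))
    (hfin : B.Finite) (hne : B.Nonempty)
    (a b c d : Fin n) (hca : c < a) (hab : a < b) (hbd : b < d)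
    (C : Set (Fin n → ℕ))
    (hC : C = { w : Fin n → ℕ | ∃ i j : Fin n, a ≤ i ∧ i ≤ b ∧ c ≤ j ∧ j ≤ d ∧
      w = fun l => (if l = i then 1 else 0) + (if l = j then 1 else 0) }) :
    ¬ RightSSEP { w : Fin n → ℕ | ∃ u ∈ B, ∃ v ∈ C, w = u + v } ∧
    ¬ LeftSSEP { w : Fin n → ℕ | ∃ u ∈ B, ∃ v ∈ C, w = u + v } := by
  have hminkowski : { w : Fin n → ℕ | ∃ u ∈ B, ∃ v ∈ C, w = u + v } = B + C := by
    ext w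
    simp [Set.mem_add, eq_comm]
  obtain ⟨u₀, hu₀, hmax⟩ := B.exists_max_image (fun u => u c + u d) hfin hne
  have hcd : c < d := hca.trans (hab.trans hbd)
  have hbcC : unitPair b c ∈ C := hC ▸ ⟨b, c, hab.le, le_rfl, le_rfl, hcd.le, rfl⟩
  have hadC : unitPair a d ∈ C := hC ▸ ⟨a, d, le_rfl, hab.le, hcd.le, le_rfl, rfl⟩
  have hCcd : ∀ v ∈ C, v c + v d ≤ 1 := by
    rw [hC]
    rintro _ ⟨i, j, hai, hib, -, -, rfl⟩
    exact unitPair_apply_add_apply_le j (hca.trans_le hai).ne' (hib.trans_lt hbd).ne hcd.ne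
  rw [hminkowski]
  exact ⟨not_rightSSEP_add (hca.trans hab) hab hbd hu₀ hmax hbcC hadC hCcd,
    not_leftSSEP_add hca hab (hab.trans hbd) hu₀ hmax hbcC hadC hCcd⟩

/-- the Minkowski sum of a polymatroid base set with the base set
of the transversal ideal `P_{[a,b]} P_{[c,d]}` (with `c < a < b < d`) satisfies
neither one-sided strong symmetric exchange property. -/
theorem minkowski_sum_not_oneSided_SSEP
    {n : ℕ} (B : Set (Fin n → ℕ))
    (hfin : B.Finite) (hne : B.Nonempty)
    (hmod : ∀ u ∈ B, ∀ v ∈ B, ∑ i, u i = ∑ i, v i)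
    (hex : SymExch B)
    (a b c d : Fin n) (hca : c < a) (hab : a < b) (hbd : b < d)
    (C : Set (Fin n → ℕ))
    (hC : C = { w : Fin n → ℕ | ∃ i j : Fin n, a ≤ i ∧ i ≤ b ∧ c ≤ j ∧ j ≤ d ∧
      w = fun l => (if l = i then 1 else 0) + (if l = j then 1 else 0) }) :
    ¬ RightSSEP { w : Fin n → ℕ | ∃ u ∈ B, ∃ v ∈ C, w = u + v } ∧
    ¬ LeftSSEP { w : Fin n → ℕ | ∃ u ∈ B, ∃ v ∈ C, w = u + v } :=
  minkowski_sum_not_oneSided_SSEP_general B hfin hne a b c d hca hab hbd C hC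
end

section
/- Let K be a field, S = K[x_1,…,x_n], and let B = B(0,b|α,β) be the PLP base set of type (0,b|α,β) (so a = 0). Order monomials by the lexicographic order with x_1 > x_2 > ⋯ > x_n. Fix t ∈ B and let J be the ideal of S generated by all monomials x^u with u ∈ B and x^u >_lex x^t. Then: (a) x_n · x^t ∉ J; (b) for each 1 ≤ i ≤ n−1, one has x_i · x^t ∈ J if and only if t_i < b_i and t_1+⋯+t_i < β_i. -/
/-!
A monomial ideal contains `x_i x^t` iff one of its generators `x^u` divides it. If `u >_lex t`
and `u ≤ t + e_i`, then `u` agrees with `t` before `i` and `u_i = t_i + 1`, so the partial sum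
of `u` at `i` exceeds that of `t` by one. This gives (a), where both partial sums are pinned
to `d`, and the forward direction of (b). Conversely, if `t_i < b_i` and the partial sum of `t`
at `i` is below `β_i ≤ d`, some later coordinate of `t` is positive; moving one unit from the
first such coordinate `k` to `i` stays in `B`, since this raises the partial sums by one exactly
on `[i, k)`, where they all equal the partial sum at `i`.
-/

open Finset MvPolynomial

/-- `x^u >_lex x^v`: at the smallest index where they differ, `u` is bigger. -/
def lexGt {n : ℕ} (u v : Fin n → ℕ) : Prop :=
  ∃ i : Fin n, v i < u i ∧ ∀ j : Fin n, j < i → u j = v j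

section MonomialIdeal

variable {σ R : Type*} [Fintype σ] [CommSemiring R]

theorem prod_X_pow_eq_monomial_equivFunOnFinite (u : σ → ℕ) :
    ∏ i, (X i : MvPolynomial σ R) ^ u i = monomial (Finsupp.equivFunOnFinite.symm u) 1 := by
  rw [← prod_X_pow_eq_monomial]
  exact (prod_subset (subset_univ _) fun i _ hi => by simp_all).symm

theorem prod_X_pow_mem_span_prod_X_pow_iff [Nontrivial R] (S : Set (σ → ℕ)) (v : σ → ℕ) :
    ∏ i, (X i : MvPolynomial σ R) ^ v i ∈ Ideal.span ((fun u => ∏ i, X i ^ u i) '' S) ↔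
      ∃ u ∈ S, u ≤ v := by
  classical
  simp only [prod_X_pow_eq_monomial_equivFunOnFinite]
  rw [← Set.image_image (fun s => monomial s (1 : R)), mem_ideal_span_monomial_image,
    support_monomial, if_neg one_ne_zero]
  simp only [mem_singleton, forall_eq, Set.exists_mem_image]
  rfl

theorem X_mul_prod_X_pow [DecidableEq σ] (i : σ) (t : σ → ℕ) :
    X i * ∏ l, (X l : MvPolynomial σ R) ^ t l =
      ∏ l, X l ^ (t + Pi.single i 1 : σ → ℕ) l := by
  rw [prod_X_pow_eq_monomial_equivFunOnFinite, prod_X_pow_eq_monomial_equivFunOnFinite, X,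
    monomial_mul, one_mul]
  congr 2
  ext l
  simp [Finsupp.single_apply, Pi.single_apply, eq_comm, add_comm]

end MonomialIdeal

theorem add_single_sub_single_add_single {ι : Type*} [DecidableEq ι] {t : ι → ℕ} {k : ι}
    (htk : 0 < t k) (i : ι) :
    t + Pi.single i 1 - Pi.single k 1 + Pi.single k 1 = t + Pi.single i 1 := by
  refine tsub_add_cancel_of_le fun l => ?_
  rcases eq_or_ne l k with rfl | hl
  · rw [Pi.single_eq_same, Pi.add_apply]
    exact le_add_right htk
  · simp [hl]

section Lex

variable {n : ℕ} {u t : Fin n → ℕ} {i j k : Fin n}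

theorem lexGt.eq_of_le_add_single (h : lexGt u t) (hle : u ≤ t + Pi.single i 1) :
    (∀ j < i, u j = t j) ∧ u i = t i + 1 := by
  obtain ⟨j, hlt, heq⟩ := h
  obtain rfl : j = i := by
    by_contra hne
    have hj := hle j
    simp [hne] at hj
    omega
  exact ⟨heq, le_antisymm (by simpa using hle j) hlt⟩

theorem lexGt.sum_Iic_eq_of_le_add_single (h : lexGt u t) (hle : u ≤ t + Pi.single i 1) :
    ∑ j ∈ Iic i, u j = ∑ j ∈ Iic i, t j + 1 := by
  obtain ⟨hbefore, hi⟩ := h.eq_of_le_add_single hle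
  rw [Iic_eq_cons_Iio, sum_cons, sum_cons, hi,
    sum_congr rfl fun j hj => hbefore j (mem_Iio.1 hj)]
  ring

theorem lexGt_add_single_sub_single (hik : i < k) : lexGt (t + Pi.single i 1 - Pi.single k 1) t :=
  ⟨i, by simp [hik.ne], fun j hj => by simp [hj.ne, (hj.trans hik).ne]⟩

theorem exists_first_pos_gt_of_sum_Iic_lt (h : ∑ l ∈ Iic i, t l < ∑ l ∈ Iic j, t l) :
    ∃ k, i < k ∧ 0 < t k ∧ ∀ l, i < l → l < k → t l = 0 := by
  have hex : ∃ k, i < k ∧ 0 < t k := by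
    by_contra! hzero
    have hle : ∑ l ∈ Iic j, t l ≤ ∑ l ∈ Iic i, t l := calc
      _ ≤ ∑ l, t l := sum_le_univ_sum_of_nonneg fun _ => Nat.zero_le _
      _ = ∑ l ∈ Iic i, t l := by
        refine (sum_subset (subset_univ _) fun l _ hl => ?_).symm
        exact Nat.le_zero.1 (hzero l (lt_of_not_ge (by simpa using hl)))
    omega
  obtain ⟨k, hk⟩ := exists_minimal_of_wellFoundedLT _ hex
  refine ⟨k, hk.prop.1, hk.prop.2, fun l hil hlk => ?_⟩
  by_contra hl
  exact hk.not_prop_of_lt hlk ⟨hil, Nat.pos_of_ne_zero hl⟩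

end Lex

/-- The PLP base set `B(0,b|α,β)`. -/
def plpBaseSet {n : ℕ} (b α β : Fin n → ℕ) : Set (Fin n → ℕ) :=
  { u | ∀ i, u i ≤ b i ∧ α i ≤ ∑ j ∈ Iic i, u j ∧ ∑ j ∈ Iic i, u j ≤ β i }

section PLP

variable {n : ℕ} {b α β t : Fin n → ℕ} {i j k : Fin n}

theorem add_single_sub_single_mem_plpBaseSet (ht : t ∈ plpBaseSet b α β) (hβ : Monotone β)
    (hik : i < k) (htk : 0 < t k) (hgap : ∀ l, i < l → l < k → t l = 0) (hbi : t i < b i)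
    (hβi : ∑ j ∈ Iic i, t j < β i) :
    t + Pi.single i 1 - Pi.single k 1 ∈ plpBaseSet b α β := by
  set u := t + Pi.single i 1 - Pi.single k 1
  intro j
  obtain ⟨htb, htα, htβ⟩ := ht j
  have hsum : ∑ l ∈ Iic j, u l + (if k ≤ j then 1 else 0) =
      ∑ l ∈ Iic j, t l + if i ≤ j then 1 else 0 := by
    have := congrArg (fun f => ∑ l ∈ Iic j, f l) (add_single_sub_single_add_single htk i)
    simp only [Pi.add_apply, sum_add_distrib, sum_pi_single', mem_Iic] at this
    exact this
  refine ⟨?_, ?_⟩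
  · rcases eq_or_ne j i with rfl | hji
    · simp only [u, Pi.sub_apply, Pi.add_apply, Pi.single_eq_same]
      omega
    · exact (tsub_le_self.trans (by simp [hji])).trans htb
  rcases lt_or_ge j i with hji | hij
  · simp only [hji.not_ge, (hji.trans hik).not_ge, if_false] at hsum
    omega
  rcases lt_or_ge j k with hjk | hkj
  · have hflat : ∑ l ∈ Iic j, t l = ∑ l ∈ Iic i, t l :=
      (sum_subset (Iic_subset_Iic.2 hij) fun l hl hli =>
        hgap l (lt_of_not_ge (by simpa using hli)) ((mem_Iic.1 hl).trans_lt hjk)).symm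
    have hβij := hβ hij
    simp only [hij, hjk.not_ge, if_true, if_false] at hsum
    omega
  · simp only [hij, hkj, if_true] at hsum
    omega

theorem lt_of_exists_lexGt_mem_plpBaseSet
    (h : ∃ u ∈ plpBaseSet b α β, lexGt u t ∧ u ≤ t + Pi.single i 1) :
    t i < b i ∧ ∑ l ∈ Iic i, t l < β i := by
  obtain ⟨u, hu, hlex, hle⟩ := h
  have hui := (hlex.eq_of_le_add_single hle).2
  have hsum := hlex.sum_Iic_eq_of_le_add_single hle
  obtain ⟨hub, -, huβ⟩ := hu i
  omega

theorem exists_lexGt_mem_plpBaseSet_iff (ht : t ∈ plpBaseSet b α β) (hβ : Monotone β)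
    (hj : β i ≤ ∑ l ∈ Iic j, t l) :
    (∃ u ∈ plpBaseSet b α β, lexGt u t ∧ u ≤ t + Pi.single i 1) ↔
      t i < b i ∧ ∑ l ∈ Iic i, t l < β i := by
  refine ⟨lt_of_exists_lexGt_mem_plpBaseSet, fun ⟨hbi, hβi⟩ => ?_⟩
  obtain ⟨k, hik, htk, hgap⟩ := exists_first_pos_gt_of_sum_Iic_lt (hβi.trans_le hj)
  exact ⟨_, add_single_sub_single_mem_plpBaseSet ht hβ hik htk hgap hbi hβi,
    lexGt_add_single_sub_single hik, tsub_le_self⟩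

end PLP

theorem PLP_linear_quotients_general (K : Type*) [Field K] {n d : ℕ}
    (b α β : Fin n → ℕ)
    (hβm : Monotone β)
    (hlast : ∀ i : Fin n, (i : ℕ) = n - 1 → α i = d ∧ β i = d)
    (B : Set (Fin n → ℕ))
    (hB : B = { u : Fin n → ℕ | ∀ i : Fin n,
      u i ≤ b i ∧ α i ≤ ∑ j ∈ Finset.Iic i, u j ∧ (∑ j ∈ Finset.Iic i, u j) ≤ β i })
    (t : Fin n → ℕ) (ht : t ∈ B)
    (J : Ideal (MvPolynomial (Fin n) K))
    (hJ : J = Ideal.span { m : MvPolynomial (Fin n) K | ∃ u ∈ B, lexGt u t ∧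
      m = ∏ i, (X i : MvPolynomial (Fin n) K) ^ u i }) :
    (∀ i : Fin n, (i : ℕ) = n - 1 →
      (X i : MvPolynomial (Fin n) K) * (∏ l, (X l : MvPolynomial (Fin n) K) ^ t l) ∉ J) ∧
    (∀ i : Fin n, (i : ℕ) < n - 1 →
      ((X i : MvPolynomial (Fin n) K) * (∏ l, (X l : MvPolynomial (Fin n) K) ^ t l) ∈ J ↔
        t i < b i ∧ (∑ j ∈ Finset.Iic i, t j) < β i)) := by
  obtain rfl : B = plpBaseSet b α β := hB
  have hmem (i : Fin n) : X i * ∏ l, (X l : MvPolynomial (Fin n) K) ^ t l ∈ J ↔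
      ∃ u ∈ plpBaseSet b α β, lexGt u t ∧ u ≤ t + Pi.single i 1 := by
    have hgens : { m : MvPolynomial (Fin n) K | ∃ u ∈ plpBaseSet b α β, lexGt u t ∧
        m = ∏ i, X i ^ u i } =
        (fun u => ∏ i, X i ^ u i) '' { u | u ∈ plpBaseSet b α β ∧ lexGt u t } := by
      ext
      simp [eq_comm, and_assoc]
    rw [hJ, hgens, X_mul_prod_X_pow, prod_X_pow_mem_span_prod_X_pow_iff]
    simp [and_assoc]
  refine ⟨fun i hi h => ?_, fun i hi => ?_⟩
  · obtain ⟨hαi, hβi⟩ := hlast i hi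
    have hsum_lt := (lt_of_exists_lexGt_mem_plpBaseSet ((hmem i).1 h)).2
    have hsum_ge := (ht i).2.1
    omega
  · set last : Fin n := ⟨n - 1, by omega⟩
    obtain ⟨hαlast, hβlast⟩ := hlast last rfl
    have hβi : β i ≤ ∑ l ∈ Iic last, t l := calc
      β i ≤ β last := hβm (Fin.le_def.2 hi.le)
      _ = α last := hβlast.trans hαlast.symm
      _ ≤ ∑ l ∈ Iic last, t l := (ht last).2.1
    rw [hmem, exists_lexGt_mem_plpBaseSet_iff ht hβm hβi]

/-- linear quotients of a PLP-polymatroidal ideal of type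
`(0,b|α,β)` with respect to the lexicographic order. -/
theorem PLP_linear_quotients (K : Type*) [Field K] {n d : ℕ} (hn : 0 < n) (hd : 0 < d)
    (b α β : Fin n → ℕ)
    (hαm : Monotone α) (hβm : Monotone β)
    (hlast : ∀ i : Fin n, (i : ℕ) = n - 1 → α i = d ∧ β i = d)
    (hαβ : ∀ i, α i ≤ β i)
    (B : Set (Fin n → ℕ))
    (hB : B = { u : Fin n → ℕ | ∀ i : Fin n,
      u i ≤ b i ∧ α i ≤ ∑ j ∈ Finset.Iic i, u j ∧ (∑ j ∈ Finset.Iic i, u j) ≤ β i })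
    (t : Fin n → ℕ) (ht : t ∈ B)
    (J : Ideal (MvPolynomial (Fin n) K))
    (hJ : J = Ideal.span { m : MvPolynomial (Fin n) K | ∃ u ∈ B, lexGt u t ∧
      m = ∏ i, (X i : MvPolynomial (Fin n) K) ^ u i }) :
    (∀ i : Fin n, (i : ℕ) = n - 1 →
      (X i : MvPolynomial (Fin n) K) * (∏ l, (X l : MvPolynomial (Fin n) K) ^ t l) ∉ J) ∧
    (∀ i : Fin n, (i : ℕ) < n - 1 →
      ((X i : MvPolynomial (Fin n) K) * (∏ l, (X l : MvPolynomial (Fin n) K) ^ t l) ∈ J ↔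
        t i < b i ∧ (∑ j ∈ Finset.Iic i, t j) < β i)) :=
  PLP_linear_quotients_general K b α β hβm hlast B hB t ht J hJ
end

section
/- Let K be a field, S = K[x_1,…,x_n], and let I ⊆ S be an LP-polymatroidal ideal. Then every associated prime ideal of S/I is of the form P_{[s,t]} = (x_s, x_{s+1}, …, x_t) for some 1 ≤ s ≤ t ≤ n. -/
/-!
An associated prime `P = (I : f)` of a monomial ideal `I` is again monomial: if `p ∈ P`, comparing
leading terms in `p * f ∈ I` shows that some power of the leading monomial of `p` multiplies `f`
into `I`, so by primality that monomial lies in `P`; peeling off leading terms, every monomial of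
`p` lies in `P`. Hence `P` is generated by the variables it contains.

It remains to see that `A = {i | x_i ∈ P}` is an interval. A monomial `x^m` lies in the
LP-polymatroidal ideal iff `m` satisfies the Hall-type inequalities `α_i ≤ m_1 + ⋯ + m_i` and
`α_i ≤ β_j + m_{j+1} + ⋯ + m_i` for `j < i`. Each of them bounds a sum of `m` over an interval, so
if `x_a x^u` and `x_c x^u` lie in the ideal, so does `x_b x^u` for every `a < b < c`. Applying this
to the monomials `x^u` of `f` shows that `x_a, x_c ∈ P` forces `x_b ∈ P`.
-/

open Finset MvPolynomial

theorem le_add_ite_of_imp {L R : ℕ} {p q r : Prop} [Decidable p] [Decidable q] [Decidable r]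
    (h : p → r → q) (hp : L ≤ R + if p then 1 else 0) (hr : L ≤ R + if r then 1 else 0) :
    L ≤ R + if q then 1 else 0 := by
  split_ifs at * <;> first | omega | tauto

theorem sum_add_pi_single_one {κ : Type*} [DecidableEq κ] (u : κ → ℕ) (x : κ) (s : Finset κ) :
    ∑ k ∈ s, (u + Pi.single x 1 : κ → ℕ) k = ∑ k ∈ s, u k + if x ∈ s then 1 else 0 := by
  simp only [Pi.add_apply, sum_add_distrib, sum_pi_single']

section LPCombinatorics

variable {ι : Type*} [LinearOrder ι] [LocallyFiniteOrderBot ι]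

theorem Finset.sum_Iic_eq_sum_Iic_add_sum_Ioc [LocallyFiniteOrder ι] {M : Type*}
    [AddCommMonoid M] (f : ι → M) {j i : ι} (h : j ≤ i) :
    ∑ k ∈ Iic i, f k = ∑ k ∈ Iic j, f k + ∑ k ∈ Ioc j i, f k := by
  rw [← Iic_union_Ioc_eq_Iic h, sum_union (Iic_disjoint_Ioc le_rfl)]

theorem Finset.Iio_eq_empty_or_exists_Iio_eq_Iic [LocallyFiniteOrder ι] (i : ι) :
    Iio i = ∅ ∨ ∃ j < i, Iio i = Iic j ∧ Ioc j i = {i} := by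
  rcases (Iio i).eq_empty_or_nonempty with h | hne
  · exact Or.inl h
  set j := (Iio i).max' hne
  have hji : j < i := mem_Iio.1 ((Iio i).max'_mem hne)
  have hlt : ∀ k, k < i ↔ k ≤ j :=
    fun k => ⟨fun hk => (Iio i).le_max' k (mem_Iio.2 hk), fun hk => hk.trans_lt hji⟩
  refine Or.inr ⟨j, hji, ?_, ?_⟩
  · ext k
    rw [mem_Iio, mem_Iic, hlt]
  · ext k
    rw [mem_Ioc, mem_singleton, ← not_le, ← hlt, not_lt, ← le_antisymm_iff, eq_comm]

theorem Finset.Iic_eq_singleton_of_Iio_eq_empty {i : ι} (h : Iio i = ∅) : Iic i = {i} := by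
  rw [← Iio_insert, h, insert_empty]

theorem Monotone.finset_sup_Iic {M : ι → ℕ} (hM : Monotone M) (j : ι) : (Iic j).sup M = M j :=
  le_antisymm (Finset.sup_le fun _ hk => hM (mem_Iic.1 hk)) (le_sup (mem_Iic.2 le_rfl))

variable (α β : ι → ℕ)

/-- `x^v` is a generator of the LP-polymatroidal ideal of type `(α, β)`; the degree condition
`∑ v = d` is the constraint at the last index, where `α = β = d`. -/
def IsLPExponent (v : ι → ℕ) : Prop :=
  ∀ i, α i ≤ ∑ k ∈ Iic i, v k ∧ ∑ k ∈ Iic i, v k ≤ β i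

def LPHallCondition [LocallyFiniteOrder ι] (m : ι → ℕ) : Prop :=
  (∀ i, α i ≤ ∑ k ∈ Iic i, m k) ∧ ∀ j i, j < i → α i ≤ β j + ∑ k ∈ Ioc j i, m k

variable {α β}

theorem IsLPExponent.mono {α' β' v : ι → ℕ} (hv : IsLPExponent α' β' v) (hα : α ≤ α')
    (hβ : β' ≤ β) : IsLPExponent α β v :=
  fun i => ⟨(hα i).trans (hv i).1, (hv i).2.trans (hβ i)⟩

variable [LocallyFiniteOrder ι]

theorem IsLPExponent.lpHallCondition {v m : ι → ℕ} (hv : IsLPExponent α β v) (hvm : v ≤ m) :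
    LPHallCondition α β m := by
  refine ⟨fun i => (hv i).1.trans (sum_le_sum fun k _ => hvm k), fun j i hji => ?_⟩
  calc α i ≤ ∑ k ∈ Iic j, v k + ∑ k ∈ Ioc j i, v k := by
        rw [← sum_Iic_eq_sum_Iic_add_sum_Ioc _ hji.le]; exact (hv i).1
    _ ≤ β j + ∑ k ∈ Ioc j i, m k := add_le_add (hv j).2 (sum_le_sum fun k _ => hvm k)

theorem exists_le_isLPExponent_self {M m : ι → ℕ} (hM : Monotone M)
    (h : LPHallCondition M M m) : ∃ z ≤ m, IsLPExponent M M z := by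
  -- `(Iio i).sup M` is `M` at the predecessor of `i`, or `0` if `i` is minimal.
  set z : ι → ℕ := fun i => M i - (Iio i).sup M
  have hsum : ∀ i, ∑ k ∈ Iic i, z k = M i := by
    intro i
    induction hN : #(Iio i) using Nat.strong_induction_on generalizing i with
    | _ N ih =>
    rw [← add_sum_Iio_eq_sum_Iic]
    rcases Iio_eq_empty_or_exists_Iio_eq_Iic i with h0 | ⟨j, hji, hIio, -⟩
    · simp [z, h0]
    · have hcard : #(Iio j) < N := hN ▸ card_lt_card (Iio_ssubset_Iio hji)
      rw [hIio, ih _ hcard j rfl]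
      simp only [z, hIio, hM.finset_sup_Iic]
      have := hM hji.le
      omega
  refine ⟨z, fun i => ?_, fun i => by simp [hsum]⟩
  rcases Iio_eq_empty_or_exists_Iio_eq_Iic i with h0 | ⟨j, hji, hIio, hIoc⟩
  · simpa [z, h0, Iic_eq_singleton_of_Iio_eq_empty h0] using h.1 i
  · have := h.2 j i hji
    simp only [hIoc, sum_singleton] at this
    simp only [z, hIio, hM.finset_sup_Iic]
    omega

theorem LPHallCondition.exists_between (hβ : Monotone β) (hαβ : α ≤ β) {m : ι → ℕ}
    (h : LPHallCondition α β m) : ∃ M, Monotone M ∧ α ≤ M ∧ M ≤ β ∧ LPHallCondition M M m := by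
  -- `M i = S i - D i` is the largest partial sum at `i` of an exponent below `m` respecting the
  -- upper bounds: `D i` is the excess of `S` over `β` that has accumulated up to `i`.
  set S : ι → ℕ := fun i => ∑ k ∈ Iic i, m k
  set D : ι → ℕ := fun i => (Iic i).sup fun j => S j - β j
  have hS : Monotone S := fun i i' h => sum_le_sum_of_subset (Iic_subset_Iic.2 h)
  have hSIoc : ∀ j i, j ≤ i → S i = S j + ∑ k ∈ Ioc j i, m k :=
    fun j i h => sum_Iic_eq_sum_Iic_add_sum_Ioc m h
  have hDS : ∀ i, D i ≤ S i := fun i =>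
    Finset.sup_le fun j hj => (Nat.sub_le _ _).trans (hS (mem_Iic.1 hj))
  have hD : Monotone D := fun i i' h => sup_mono (Iic_subset_Iic.2 h)
  have hSD : ∀ i, S i - β i ≤ D i := fun i => le_sup (f := fun j => S j - β j) (mem_Iic.2 le_rfl)
  have hαD : ∀ i, D i ≤ S i - α i := fun i => Finset.sup_le fun j hj => by
    rcases (mem_Iic.1 hj).lt_or_eq with hji | rfl
    · have := h.2 j i hji; have := hSIoc j i hji.le; omega
    · have : α j ≤ β j := hαβ j; omega
  refine ⟨fun i => S i - D i, fun i i' hii' => ?_, fun i => ?_, fun i => ?_, fun i => ?_,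
    fun j i hji => ?_⟩
  · have hstep : D i' ≤ D i + (S i' - S i) := Finset.sup_le fun k hk => by
      rcases le_or_gt k i with hki | hik
      · exact (le_sup (f := fun j => S j - β j) (mem_Iic.2 hki)).trans (Nat.le_add_right _ _)
      · show S k - β k ≤ D i + (S i' - S i)
        have := hS (mem_Iic.1 hk); have := hβ hik.le; have := hSD i; have := hS hii'
        omega
    show S i - D i ≤ S i' - D i'
    have := hDS i; have := hS hii'; omega
  · show α i ≤ S i - D i; have := hαD i; have : α i ≤ S i := h.1 i; omega
  · show S i - D i ≤ β i; have := hSD i; omega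
  · exact Nat.sub_le _ _
  · show S i - D i ≤ S j - D j + ∑ k ∈ Ioc j i, m k
    have := hSIoc j i hji.le; have := hD hji.le; have := hDS j; omega

theorem exists_le_isLPExponent_iff (hβ : Monotone β) (hαβ : α ≤ β) {m : ι → ℕ} :
    (∃ v ≤ m, IsLPExponent α β v) ↔ LPHallCondition α β m := by
  refine ⟨fun ⟨v, hvm, hv⟩ => hv.lpHallCondition hvm, fun h => ?_⟩
  obtain ⟨M, hM, hαM, hMβ, hMm⟩ := h.exists_between hβ hαβ
  obtain ⟨z, hzm, hz⟩ := exists_le_isLPExponent_self hM hMm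
  exact ⟨z, hzm, hz.mono hαM hMβ⟩

theorem lpHallCondition_const {D : ℕ} (hα : ∀ i, α i ≤ D) : LPHallCondition α β fun _ => D :=
  ⟨fun i => (hα i).trans (single_le_sum (fun _ _ => Nat.zero_le D) (mem_Iic.2 le_rfl)),
    fun _ i hji => (hα i).trans <| (single_le_sum (fun _ _ => Nat.zero_le D)
      (mem_Ioc.2 ⟨hji, le_rfl⟩)).trans (Nat.le_add_left _ _)⟩

theorem LPHallCondition.add_single_of_lt_of_lt {u : ι → ℕ} {a b c : ι} (hab : a < b)
    (hbc : b < c) (ha : LPHallCondition α β (u + Pi.single a 1))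
    (hc : LPHallCondition α β (u + Pi.single c 1)) : LPHallCondition α β (u + Pi.single b 1) := by
  simp only [LPHallCondition, sum_add_pi_single_one, ← add_assoc] at *
  refine ⟨fun i => le_add_ite_of_imp ?_ (ha.1 i) (hc.1 i),
    fun j i hji => le_add_ite_of_imp ?_ (ha.2 j i hji) (hc.2 j i hji)⟩
  · simp only [mem_Iic]
    exact fun _ hci => hbc.le.trans hci
  · simp only [mem_Ioc]
    exact fun ⟨hja, _⟩ ⟨_, hci⟩ => ⟨hja.trans hab, hbc.le.trans hci⟩

end LPCombinatorics

theorem MonomialOrder.support_subLTerm {σ R : Type*} [DecidableEq σ] [CommRing R]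
    (m : MonomialOrder σ) (f : MvPolynomial σ R) :
    (m.subLTerm f).support = f.support.erase (m.degree f) := by
  ext u
  by_cases hu : u = m.degree f
  · subst hu
    simp [MonomialOrder.subLTerm, MonomialOrder.leadingCoeff]
  · simp [MonomialOrder.subLTerm, coeff_monomial, Ne.symm hu, hu]

theorem exists_forall_mem_iff_mul_mem_of_mem_associatedPrimes {R : Type*} [CommRing R]
    [IsNoetherianRing R] {I P : Ideal R} (hP : P ∈ associatedPrimes R (R ⧸ I)) :
    ∃ f : R, ∀ g, g ∈ P ↔ g * f ∈ I := by
  obtain ⟨-, x, rfl⟩ := isAssociatedPrime_iff.1 hP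
  obtain ⟨f, rfl⟩ := Ideal.Quotient.mk_surjective x
  refine ⟨f, fun g => ?_⟩
  rw [Submodule.mem_colon_singleton, Submodule.mem_bot, Ideal.Quotient.eq_zero_iff_mem.symm]
  rfl

namespace MvPolynomial

section Semiring

variable {σ R : Type*} [CommSemiring R]

def IsMonomialIdeal (I : Ideal (MvPolynomial σ R)) : Prop :=
  ∀ p ∈ I, ∀ u ∈ p.support, monomial u (1 : R) ∈ I

theorem mem_of_forall_monomial_mem {I : Ideal (MvPolynomial σ R)} {p : MvPolynomial σ R}
    (h : ∀ u ∈ p.support, monomial u (1 : R) ∈ I) : p ∈ I := by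
  rw [p.as_sum]
  refine I.sum_mem fun u hu => ?_
  rw [← mul_one (coeff u p), ← C_mul_monomial]
  exact I.mul_mem_left _ (h u hu)

theorem IsMonomialIdeal.mem_iff {I : Ideal (MvPolynomial σ R)} (hI : IsMonomialIdeal I)
    {p : MvPolynomial σ R} : p ∈ I ↔ ∀ u ∈ p.support, monomial u (1 : R) ∈ I :=
  ⟨hI p, mem_of_forall_monomial_mem⟩

theorem isMonomialIdeal_span_monomial_image (S : Set (σ →₀ ℕ)) :
    IsMonomialIdeal (Ideal.span ((fun s => monomial s (1 : R)) '' S)) := by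
  classical
  intro p hp u hu
  rw [mem_ideal_span_monomial_image] at hp ⊢
  intro u' hu'
  rw [support_monomial] at hu'
  split_ifs at hu'
  · simp at hu'
  · rw [mem_singleton.1 hu']
    exact hp u hu

theorem monomial_mem_span_monomial_image_iff [Nontrivial R] {S : Set (σ →₀ ℕ)} {u : σ →₀ ℕ} :
    monomial u (1 : R) ∈ Ideal.span ((fun s => monomial s (1 : R)) '' S) ↔ ∃ s ∈ S, s ≤ u := by
  classical
  simp [mem_ideal_span_monomial_image, support_monomial]

theorem IsMonomialIdeal.X_mul_mem_iff {I : Ideal (MvPolynomial σ R)} (hI : IsMonomialIdeal I)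
    (i : σ) {f : MvPolynomial σ R} :
    X i * f ∈ I ↔ ∀ u ∈ f.support, monomial (u + Finsupp.single i 1) (1 : R) ∈ I := by
  rw [hI.mem_iff, support_X_mul]
  simp only [Finset.forall_mem_map, addLeftEmbedding_apply, add_comm (Finsupp.single i 1)]

theorem exists_X_mem_of_monomial_mem {P : Ideal (MvPolynomial σ R)} (hP : P.IsPrime)
    {u : σ →₀ ℕ} (hu : monomial u (1 : R) ∈ P) : ∃ i, u i ≠ 0 ∧ X i ∈ P := by
  rw [monomial_eq, C_1, one_mul, Finsupp.prod, hP.prod_mem_iff] at hu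
  obtain ⟨i, hi, hiP⟩ := hu
  exact ⟨i, Finsupp.mem_support_iff.1 hi, hP.mem_of_pow_mem _ hiP⟩

theorem IsMonomialIdeal.eq_span_X_of_isPrime {P : Ideal (MvPolynomial σ R)}
    (hPm : IsMonomialIdeal P) (hP : P.IsPrime) : P = Ideal.span (X '' {i | X i ∈ P}) := by
  refine le_antisymm (fun p hp => mem_ideal_span_X_image.2 fun u hu => ?_)
    (Ideal.span_le.2 (Set.image_subset_iff.2 fun i hi => hi))
  obtain ⟨i, hui, hi⟩ := exists_X_mem_of_monomial_mem hP (hPm p hp u hu)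
  exact ⟨i, hi, hui⟩

theorem card_support_monomial_one_mul (w : σ →₀ ℕ) (q : MvPolynomial σ R) :
    #(monomial w (1 : R) * q).support = #q.support := by
  have : (monomial w (1 : R) * q).support = q.support.map (addLeftEmbedding w) :=
    AddMonoidAlgebra.support_coeff_single_mul q _ (by simp) _
  rw [this, card_map]

end Semiring

section Ring

variable {σ R : Type*} [CommRing R]

theorem IsMonomialIdeal.of_forall_monomial_degree_mem (m : MonomialOrder σ)
    {J : Ideal (MvPolynomial σ R)} (h : ∀ p ∈ J, p ≠ 0 → monomial (m.degree p) (1 : R) ∈ J) :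
    IsMonomialIdeal J := by
  classical
  intro p hp u hu
  induction hN : #p.support using Nat.strong_induction_on generalizing p with
  | _ N ih =>
  by_cases hu' : u = m.degree p
  · exact hu' ▸ h p hp (support_nonempty.1 ⟨u, hu⟩)
  · have hsub : m.subLTerm p ∈ J := by
      refine J.sub_mem hp ?_
      rw [← mul_one (m.leadingCoeff p), ← C_mul_monomial]
      exact J.mul_mem_left _ (h p hp (support_nonempty.1 ⟨u, hu⟩))
    refine ih _ ?_ _ hsub ?_ rfl
    · rw [← hN, m.support_subLTerm]
      exact card_erase_lt_of_mem (m.degree_mem_support (support_nonempty.1 ⟨u, hu⟩))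
    · rw [m.support_subLTerm]
      exact mem_erase.2 ⟨hu', hu⟩

variable [NoZeroDivisors R]

theorem IsMonomialIdeal.exists_monomial_degree_pow_mul_mem {m : MonomialOrder σ}
    {I : Ideal (MvPolynomial σ R)} (hI : IsMonomialIdeal I) {p : MvPolynomial σ R} (hp : p ≠ 0)
    {h : MvPolynomial σ R} (hph : p * h ∈ I) :
    ∃ N, monomial (m.degree p) (1 : R) ^ N * h ∈ I := by
  classical
  set x := monomial (m.degree p) (1 : R)
  induction hN : #h.support using Nat.strong_induction_on generalizing h with
  | _ N ih =>
  by_cases h0 : h = 0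
  · exact ⟨0, by simp [h0]⟩
  have hlead : x * m.leadingTerm h ∈ I := by
    have hmem : m.degree p + m.degree h ∈ (p * h).support := by
      rw [mem_support_iff, m.coeff_mul_of_degree_add]
      exact mul_ne_zero (m.leadingCoeff_ne_zero_iff.2 hp) (m.leadingCoeff_ne_zero_iff.2 h0)
    rw [MonomialOrder.leadingTerm, monomial_mul, one_mul, ← mul_one (m.leadingCoeff h),
      ← C_mul_monomial]
    exact I.mul_mem_left _ (hI _ hph _ hmem)
  have hrest : p * (x * m.subLTerm h) ∈ I := by
    have : p * (x * m.subLTerm h) = x * (p * h) - p * (x * m.leadingTerm h) := by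
      rw [MonomialOrder.subLTerm, MonomialOrder.leadingTerm]; ring
    rw [this]
    exact I.sub_mem (I.mul_mem_left _ hph) (I.mul_mem_left _ hlead)
  have hcard : #(x * m.subLTerm h).support < N := by
    rw [card_support_monomial_one_mul, m.support_subLTerm, ← hN]
    exact card_erase_lt_of_mem (m.degree_mem_support h0)
  obtain ⟨N', hN'⟩ := ih _ hcard hrest rfl
  refine ⟨N' + 1, ?_⟩
  have : x ^ (N' + 1) * h = x ^ N' * (x * m.subLTerm h) + x ^ N' * (x * m.leadingTerm h) := by
    rw [MonomialOrder.subLTerm, MonomialOrder.leadingTerm]; ring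
  rw [this]
  exact I.add_mem hN' (I.mul_mem_left _ hlead)

theorem IsMonomialIdeal.of_isPrime_of_forall_mem_iff [LinearOrder σ] [WellFoundedGT σ]
    {I P : Ideal (MvPolynomial σ R)} (hI : IsMonomialIdeal I) (hP : P.IsPrime)
    {f : MvPolynomial σ R} (hPf : ∀ g, g ∈ P ↔ g * f ∈ I) : IsMonomialIdeal P := by
  refine of_forall_monomial_degree_mem MonomialOrder.lex fun p hp hp0 => ?_
  obtain ⟨N, hN⟩ := hI.exists_monomial_degree_pow_mul_mem hp0 ((hPf p).1 hp)
  exact hP.mem_of_pow_mem N ((hPf _).2 hN)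

end Ring

end MvPolynomial

section LPIdeal

variable {ι : Type*} [LinearOrder ι] [LocallyFiniteOrder ι] [LocallyFiniteOrderBot ι]
  (R : Type*) [CommSemiring R] (α β : ι → ℕ)

noncomputable def lpIdeal : Ideal (MvPolynomial ι R) :=
  Ideal.span ((fun s => monomial s (1 : R)) '' {v | IsLPExponent α β ⇑v})

variable {R α β} [Nontrivial R]

theorem monomial_mem_lpIdeal_iff (hβ : Monotone β) (hαβ : α ≤ β) {u : ι →₀ ℕ} :
    monomial u (1 : R) ∈ lpIdeal R α β ↔ LPHallCondition α β ⇑u := by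
  rw [lpIdeal, monomial_mem_span_monomial_image_iff, ← exists_le_isLPExponent_iff hβ hαβ]
  constructor
  · rintro ⟨v, hv, hvu⟩
    exact ⟨v, hvu, hv⟩
  · rintro ⟨v, hvu, hv⟩
    have hfin : (Function.support v).Finite :=
      u.hasFiniteSupport.subset fun k hk => ((Nat.pos_of_ne_zero hk).trans_le (hvu k)).ne'
    exact ⟨Finsupp.ofSupportFinite v hfin, hv, hvu⟩

theorem X_mul_mem_lpIdeal_of_lt_of_lt (hβ : Monotone β) (hαβ : α ≤ β)
    {f : MvPolynomial ι R} {a b c : ι} (hab : a < b) (hbc : b < c)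
    (ha : X a * f ∈ lpIdeal R α β) (hc : X c * f ∈ lpIdeal R α β) :
    X b * f ∈ lpIdeal R α β := by
  have hI : IsMonomialIdeal (lpIdeal R α β) := isMonomialIdeal_span_monomial_image _
  simp only [hI.X_mul_mem_iff, monomial_mem_lpIdeal_iff hβ hαβ, Finsupp.coe_add,
    Finsupp.single_eq_pi_single] at ha hc ⊢
  exact fun u hu => (ha u hu).add_single_of_lt_of_lt hab hbc (hc u hu)

end LPIdeal

section Fin

variable {n d : ℕ} {α β : Fin n → ℕ}

theorem isLPExponent_iff_of_last (hn : 0 < n)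
    (hlast : ∀ i : Fin n, (i : ℕ) = n - 1 → α i = d ∧ β i = d) (u : Fin n → ℕ) :
    IsLPExponent α β u ↔ (∑ i, u i = d) ∧ ∀ i : Fin n, (i : ℕ) < n - 1 →
      α i ≤ ∑ j ∈ Iic i, u j ∧ ∑ j ∈ Iic i, u j ≤ β i := by
  have hIic : ∀ i : Fin n, (i : ℕ) = n - 1 → Iic i = univ := fun i hi =>
    eq_univ_of_forall fun j => mem_Iic.2 (Fin.le_def.2 (by omega))
  refine ⟨fun h => ⟨?_, fun i _ => h i⟩, fun ⟨hsum, h⟩ i => ?_⟩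
  · have hl := hlast ⟨n - 1, by omega⟩ rfl
    have := h ⟨n - 1, by omega⟩
    rw [hIic _ rfl, hl.1, hl.2] at this
    exact le_antisymm this.2 this.1
  · rcases Nat.lt_or_ge i (n - 1) with hi | hi
    · exact h i hi
    · have hi' : (i : ℕ) = n - 1 := by omega
      rw [hIic i hi', hsum, (hlast i hi').1, (hlast i hi').2]
      exact ⟨le_rfl, le_rfl⟩

theorem span_lpGenerators_eq_lpIdeal (K : Type*) [Field K] (hn : 0 < n)
    (hlast : ∀ i : Fin n, (i : ℕ) = n - 1 → α i = d ∧ β i = d) :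
    Ideal.span { m : MvPolynomial (Fin n) K | ∃ u : Fin n → ℕ, (∑ i, u i = d) ∧
      (∀ i : Fin n, (i : ℕ) < n - 1 →
        α i ≤ ∑ j ∈ Iic i, u j ∧ (∑ j ∈ Iic i, u j) ≤ β i) ∧
      m = ∏ i, (X i : MvPolynomial (Fin n) K) ^ u i } = lpIdeal K α β := by
  rw [lpIdeal]
  congr 1
  ext p
  simp only [Set.mem_ofPred_eq, Set.mem_image, ← and_assoc, ← isLPExponent_iff_of_last hn hlast]
  constructor
  · rintro ⟨u, hu, rfl⟩
    refine ⟨Finsupp.equivFunOnFinite.symm u, by simpa using hu, ?_⟩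
    rw [monomial_eq, C_1, one_mul, Finsupp.prod_pow]
    rfl
  · rintro ⟨v, hv, rfl⟩
    exact ⟨v, hv, by rw [monomial_eq, C_1, one_mul, Finsupp.prod_pow]⟩

theorem monomial_const_mem_lpIdeal (K : Type*) [Field K] (hn : 0 < n) (hβ : Monotone β)
    (hlast : ∀ i : Fin n, (i : ℕ) = n - 1 → α i = d ∧ β i = d) (hαβ : ∀ i, α i ≤ β i) :
    monomial (Finsupp.equivFunOnFinite.symm fun _ => d) (1 : K) ∈ lpIdeal K α β := by
  have hα : ∀ i, α i ≤ d := fun i =>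
    (hαβ i).trans ((hβ (Fin.le_def.2 (by omega : (i : ℕ) ≤ n - 1))).trans_eq
      (hlast ⟨n - 1, by omega⟩ rfl).2)
  exact (monomial_mem_lpIdeal_iff hβ hαβ).2 (by simpa using lpHallCondition_const hα)

end Fin

theorem LP_ass_interval_general {n : ℕ} (K : Type*) [Field K] (hn : 0 < n) {d : ℕ}
    (α β : Fin n → ℕ)
    (hβm : Monotone β)
    (hlast : ∀ i : Fin n, (i : ℕ) = n - 1 → α i = d ∧ β i = d)
    (hαβ : ∀ i, α i ≤ β i)
    (I : Ideal (MvPolynomial (Fin n) K))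
    (hI : I = Ideal.span { m : MvPolynomial (Fin n) K | ∃ u : Fin n → ℕ,
      (∑ i, u i = d) ∧
      (∀ i : Fin n, (i : ℕ) < n - 1 →
        α i ≤ ∑ j ∈ Finset.Iic i, u j ∧ (∑ j ∈ Finset.Iic i, u j) ≤ β i) ∧
      m = ∏ i, (X i : MvPolynomial (Fin n) K) ^ u i }) :
    ∀ P ∈ associatedPrimes (MvPolynomial (Fin n) K) (MvPolynomial (Fin n) K ⧸ I),
      ∃ s t : Fin n, s ≤ t ∧
        P = Ideal.span
          ((fun i => (X i : MvPolynomial (Fin n) K)) '' { i : Fin n | s ≤ i ∧ i ≤ t }) := by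
  rw [span_lpGenerators_eq_lpIdeal K hn hlast] at hI
  subst hI
  intro P hP
  have hPp : P.IsPrime := hP.isPrime
  obtain ⟨f, hPf⟩ := exists_forall_mem_iff_mul_mem_of_mem_associatedPrimes hP
  have hPm : IsMonomialIdeal P :=
    (isMonomialIdeal_span_monomial_image _).of_isPrime_of_forall_mem_iff hPp hPf
  have hAne : {i | X i ∈ P}.Nonempty := by
    obtain ⟨i, -, hi⟩ := exists_X_mem_of_monomial_mem hPp
      ((hPf _).2 (Ideal.mul_mem_right _ _ (monomial_const_mem_lpIdeal K hn hβm hlast hαβ)))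
    exact ⟨i, hi⟩
  have hAconn : {i | X i ∈ P}.OrdConnected :=
    Set.ordConnected_of_Ioo fun a ha c hc _ b hb => (hPf _).2 <|
      X_mul_mem_lpIdeal_of_lt_of_lt hβm hαβ hb.1 hb.2 ((hPf _).1 ha) ((hPf _).1 hc)
  have : NeZero n := ⟨hn.ne'⟩
  have hA := hAne.ordConnected_iff_of_bdd'.1 hAconn
  exact ⟨_, _, Set.nonempty_Icc.1 (hA ▸ hAne),
    (hPm.eq_span_X_of_isPrime hPp).trans (congrArg (fun s => Ideal.span (X '' s)) hA)⟩

/-- every associated prime of an LP-polymatroidal ideal is a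
monomial prime ideal `P_{[s,t]} = (x_s, …, x_t)` generated by consecutive
variables. -/
theorem LP_ass_interval {n : ℕ} (K : Type*) [Field K] (hn : 0 < n) {d : ℕ} (hd : 0 < d)
    (α β : Fin n → ℕ)
    (hαm : Monotone α) (hβm : Monotone β)
    (hlast : ∀ i : Fin n, (i : ℕ) = n - 1 → α i = d ∧ β i = d)
    (hαβ : ∀ i, α i ≤ β i)
    (I : Ideal (MvPolynomial (Fin n) K))
    (hI : I = Ideal.span { m : MvPolynomial (Fin n) K | ∃ u : Fin n → ℕ,
      (∑ i, u i = d) ∧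
      (∀ i : Fin n, (i : ℕ) < n - 1 →
        α i ≤ ∑ j ∈ Finset.Iic i, u j ∧ (∑ j ∈ Finset.Iic i, u j) ≤ β i) ∧
      m = ∏ i, (X i : MvPolynomial (Fin n) K) ^ u i }) :
    ∀ P ∈ associatedPrimes (MvPolynomial (Fin n) K) (MvPolynomial (Fin n) K ⧸ I),
      ∃ s t : Fin n, s ≤ t ∧
        P = Ideal.span
          ((fun i => (X i : MvPolynomial (Fin n) K)) '' { i : Fin n | s ≤ i ∧ i ≤ t }) :=
  LP_ass_interval_general K hn α β hβm hlast hαβ I hI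
end

section
/- Let K be a field, S = K[x_1,…,x_n], and let I ⊆ S be the LP-polymatroidal ideal of type (α,β). Then for 1 ≤ s ≤ t ≤ n, the prime P_{[s,t]} = (x_s,…,x_t) is an associated prime of S/I if and only if α_i < β_i for all i = s,…,t−1, and β_{s−1} < β_s, β_{s−1} < α_t, and α_{t−1} < α_t, with the conventions α_0 = β_0 = 0. In particular, (x_t) ∈ Ass(S/I) if and only if α_t > β_{t−1}. -/
open Finset MvPolynomial

/-- The partial sum `u_1 + ⋯ + u_i` of a vector `u ∈ ℕ^n` (`i = 0, 1, …, n`). -/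
def psum {n : ℕ} (u : Fin n → ℕ) (i : ℕ) : ℕ :=
  ∑ j ∈ Finset.univ.filter (fun j : Fin n => (j : ℕ) < i), u j

/-!
Since `I` is a monomial ideal and `P = P_{[s,t]}` a monomial prime, `P ∈ Ass(S/I)` iff
`P = (I : x^v)` for a single monomial `x^v`: if `P = (I : f)`, then `P` contains every
`(I : x^v)` with `v` in the support of `f` and their intersection lies in `(I : f)`, so by
primality one of them equals `P`. The equality `(I : x^v) = P` says that `x^m x^v ∈ I` iff some
`x_i` with `s ≤ i ≤ t` divides `x^m`.

Membership of `x^w` in `I` depends only on the partial sums `ρ = psum w`: `x^w ∈ I` iff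
`ρ_b - ρ_a ≥ α_b - β_a` for all `a ≤ b` (a greedy path under `β` realises a generator dividing
`x^w`), and multiplying by `x_j` adds `1` to `ρ` from index `j` on. If `(I : x^v) = P`, then
`x_s x^v, x_t x^v ∈ I` show that every violated inequality for `v` starts before `s`, ends at or
after `t`, and fails by exactly one, while `x_{s-1} x^v, x_{t+1} x^v ∉ I` (or `x^v ∉ I` when
`s = 1` or `t = n`) give violated inequalities starting at `s - 1` and ending at `t`. As the
defects of crossing pairs add up, `(s - 1, t)` fails by exactly one, and the four conditions are
read off from this tight pair. Conversely, under the conditions `colonWitness` gives the partial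
sums of a suitable `v`.
-/

theorem monotoneOn_Iic_of_le_succ {α : Type*} [Preorder α] {f : ℕ → α} {n : ℕ}
    (h : ∀ i, i < n → f i ≤ f (i + 1)) : MonotoneOn f (Set.Iic n) :=
  monotoneOn_of_le_succ Set.ordConnected_Iic fun i _ _ hi => h i (Order.succ_le_iff.mp hi)

theorem Finsupp.exists_colon_iff_exists_fun {ι : Type*} [Finite ι] {P : (ι → ℕ) → Prop}
    {T : Set ι} :
    (∃ v : ι →₀ ℕ, ∀ m, (∃ w ∈ {w : ι →₀ ℕ | P ⇑w}, w ≤ m + v) ↔ ∃ i ∈ T, m i ≠ 0) ↔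
      ∃ v : ι → ℕ, ∀ m, (∃ w, P w ∧ w ≤ m + v) ↔ ∃ i ∈ T, m i ≠ 0 := by
  let e : (ι →₀ ℕ) ≃ (ι → ℕ) := Finsupp.equivFunOnFinite
  refine e.exists_congr fun v => e.forall_congr fun m =>
    iff_congr (e.exists_congr fun w => ?_) Iff.rfl
  rw [← Finsupp.coe_le_coe, Finsupp.coe_add]
  rfl

theorem Ideal.mem_colon_singleton {S : Type*} [CommSemiring S] {I : Ideal S} {f g : S} :
    g ∈ I.colon {f} ↔ g * f ∈ I :=
  Submodule.mem_colon_singleton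

theorem Ideal.mem_associatedPrimes_quotient_iff {S : Type*} [CommRing S] [IsNoetherianRing S]
    {I P : Ideal S} :
    P ∈ associatedPrimes S (S ⧸ I) ↔ P.IsPrime ∧ ∃ f, P = I.colon {f} := by
  have hcolon (f : S) :
      (⊥ : Submodule S (S ⧸ I)).colon {Ideal.Quotient.mk I f} = I.colon {f} := by
    ext g
    rw [Submodule.mem_colon_singleton, Submodule.mem_bot, Ideal.mem_colon_singleton,
      ← Ideal.Quotient.eq_zero_iff_mem]
    rfl
  rw [AssociatedPrimes.mem_iff, isAssociatedPrime_iff, Ideal.Quotient.mk_surjective.exists]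
  simp only [hcolon]

namespace MvPolynomial

theorem setOf_prod_X_pow_eq_image_monomial {σ R : Type*} [CommSemiring R] [Fintype σ]
    (P : (σ → ℕ) → Prop) :
    {f : MvPolynomial σ R | ∃ u, P u ∧ f = ∏ i, X i ^ u i} =
      (fun s => monomial s 1) '' {w : σ →₀ ℕ | P ⇑w} := by
  have hprod (w : σ →₀ ℕ) : ∏ i, (X i : MvPolynomial σ R) ^ w i = monomial w 1 := by
    rw [monomial_eq, C_1, one_mul, Finsupp.prod_fintype _ _ fun _ => pow_zero _]
  ext f
  refine ⟨fun ⟨u, hu, hf⟩ => ⟨Finsupp.equivFunOnFinite.symm u, hu, ?_⟩,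
    fun ⟨w, hw, hf⟩ => ⟨w, hw, by rw [← hf, hprod]⟩⟩
  rw [hf]
  exact (hprod _).symm

variable {σ R : Type*} [CommRing R]

theorem span_X_image_eq_ker_aeval (T : Set σ) [DecidablePred (· ∈ T)] :
    Ideal.span (X '' T : Set (MvPolynomial σ R)) =
      RingHom.ker (aeval fun i => if i ∈ T then 0 else X i :
        MvPolynomial σ R →ₐ[R] MvPolynomial σ R) := by
  set φ : MvPolynomial σ R →ₐ[R] MvPolynomial σ R := aeval fun i => if i ∈ T then 0 else X i
  refine le_antisymm (Ideal.span_le.mpr ?_) fun f hf => ?_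
  · rintro _ ⟨i, hi, rfl⟩
    simp [φ, hi]
  · have hφ : (Ideal.Quotient.mkₐ R (Ideal.span (X '' T))).comp φ = Ideal.Quotient.mkₐ R _ := by
      ext i
      by_cases hi : i ∈ T
      · simp only [AlgHom.comp_apply, φ, aeval_X, if_pos hi, map_zero]
        exact (Ideal.Quotient.eq_zero_iff_mem.mpr
          (Ideal.subset_span (Set.mem_image_of_mem X hi))).symm
      · simp [φ, hi]
    rw [← Ideal.Quotient.eq_zero_iff_mem, ← Ideal.Quotient.mkₐ_eq_mk R, ← hφ]
    simp [(RingHom.mem_ker).mp hf]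

theorem isPrime_span_X_image [IsDomain R] (T : Set σ) :
    (Ideal.span (X '' T : Set (MvPolynomial σ R))).IsPrime := by
  classical
  rw [span_X_image_eq_ker_aeval]
  exact RingHom.ker_isPrime _

variable (R) in
noncomputable def monomialIdeal (U : Set (σ →₀ ℕ)) : Ideal (MvPolynomial σ R) :=
  Ideal.span ((fun s => monomial s 1) '' U)

variable {U : Set (σ →₀ ℕ)} {T : Set σ}

theorem mul_monomial_mem_monomialIdeal_iff {g : MvPolynomial σ R} {v : σ →₀ ℕ} :
    g * monomial v 1 ∈ monomialIdeal R U ↔ ∀ m ∈ g.support, ∃ w ∈ U, w ≤ m + v := by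
  have hsupp : (g * monomial v 1).support = g.support.map (addRightEmbedding v) :=
    AddMonoidAlgebra.support_coeff_mul_single g _ (by simp) _
  rw [monomialIdeal, mem_ideal_span_monomial_image, hsupp, Finset.forall_mem_map]
  rfl

theorem colon_monomial_eq_span_X_iff [Nontrivial R] {v : σ →₀ ℕ} :
    (monomialIdeal R U).colon {monomial v 1} = Ideal.span (X '' T) ↔
      ∀ m, (∃ w ∈ U, w ≤ m + v) ↔ ∃ i ∈ T, m i ≠ 0 := by
  classical
  simp only [SetLike.ext_iff, Ideal.mem_colon_singleton, mul_monomial_mem_monomialIdeal_iff,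
    mem_ideal_span_X_image]
  refine ⟨fun h m => ?_, fun h g => forall₂_congr fun m _ => h m⟩
  simpa [support_monomial] using h (monomial m 1)

theorem exists_colon_monomial_eq_of_colon_eq [IsDomain R] {f : MvPolynomial σ R}
    (hf : (monomialIdeal R U).colon {f} = Ideal.span (X '' T)) :
    ∃ v, (monomialIdeal R U).colon {monomial v 1} = Ideal.span (X '' T) := by
  have hle (v) (hv : v ∈ f.support) :
      Ideal.span (X '' T) ≤ (monomialIdeal R U).colon {monomial v 1} := by
    refine Ideal.span_le.mpr ?_
    rintro _ ⟨j, hj, rfl⟩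
    have hXf : X j * f ∈ monomialIdeal R U := by
      rw [← Ideal.mem_colon_singleton, hf]
      exact Ideal.subset_span (Set.mem_image_of_mem X hj)
    obtain ⟨w, hw, hwv⟩ := mem_ideal_span_monomial_image.mp hXf (Finsupp.single j 1 + v)
      (by rw [support_X_mul]; exact Finset.mem_map_of_mem _ hv)
    rw [SetLike.mem_coe, Ideal.mem_colon_singleton, mul_monomial_mem_monomialIdeal_iff,
      support_X]
    exact fun m hm => ⟨w, hw, by rwa [Finset.mem_singleton.mp hm]⟩
  have hinf : f.support.inf (fun v => (monomialIdeal R U).colon {monomial v 1}) ≤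
      Ideal.span (X '' T) := by
    intro g hg
    rw [Submodule.mem_finsetInf] at hg
    rw [← hf, Ideal.mem_colon_singleton, f.as_sum, Finset.mul_sum]
    refine Ideal.sum_mem _ fun v hv => ?_
    rw [← mul_one (coeff v f), ← C_mul_monomial, mul_left_comm]
    exact Ideal.mul_mem_left _ _ (Ideal.mem_colon_singleton.mp (hg v hv))
  obtain ⟨v, hv, hvP⟩ := (isPrime_span_X_image T).inf_le'.mp hinf
  exact ⟨v, le_antisymm hvP (hle v hv)⟩

theorem span_X_image_mem_associatedPrimes_iff [IsDomain R] [IsNoetherianRing R] [Finite σ] :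
    Ideal.span (X '' T) ∈ associatedPrimes (MvPolynomial σ R)
        (MvPolynomial σ R ⧸ monomialIdeal R U) ↔
      ∃ v, ∀ m, (∃ w ∈ U, w ≤ m + v) ↔ ∃ i ∈ T, m i ≠ 0 := by
  rw [Ideal.mem_associatedPrimes_quotient_iff]
  refine ⟨fun ⟨_, f, hf⟩ => ?_, fun ⟨v, hv⟩ => ⟨isPrime_span_X_image T, _,
    (colon_monomial_eq_span_X_iff.mpr hv).symm⟩⟩
  obtain ⟨v, hv⟩ := exists_colon_monomial_eq_of_colon_eq hf.symm
  exact ⟨v, colon_monomial_eq_span_X_iff.mp hv⟩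

end MvPolynomial

namespace LPPolymatroidal

variable {n : ℕ}

@[simp]
theorem psum_zero (u : Fin n → ℕ) : psum u 0 = 0 := by
  simp [_root_.psum]

theorem psum_add (u w : Fin n → ℕ) (i : ℕ) : psum (u + w) i = psum u i + psum w i :=
  Finset.sum_add_distrib

theorem psum_pi_single (j : Fin n) (i : ℕ) :
    psum (Pi.single j 1) i = if (j : ℕ) < i then 1 else 0 := by
  simp [_root_.psum, Pi.single_apply, Finset.sum_ite_eq']

theorem psum_eq_add_sum (u : Fin n → ℕ) {a b : ℕ} (hab : a ≤ b) :
    psum u b = psum u a + ∑ j ∈ univ.filter (fun j : Fin n => a ≤ (j : ℕ) ∧ (j : ℕ) < b), u j := by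
  rw [_root_.psum, _root_.psum,
    ← Finset.sum_union (Finset.disjoint_filter.mpr fun j _ hj hj' => by omega)]
  congr 1
  ext j
  simp only [Finset.mem_filter, Finset.mem_union, Finset.mem_univ, true_and]
  omega

theorem psum_succ (u : Fin n → ℕ) {i : ℕ} (h : i < n) :
    psum u (i + 1) = psum u i + u ⟨i, h⟩ := by
  rw [psum_eq_add_sum u i.le_succ, Finset.sum_eq_single_of_mem ⟨i, h⟩ (by simp)]
  intro j hj hji
  simp only [Finset.mem_filter, Finset.mem_univ, true_and] at hj
  exact absurd (Fin.ext (show (j : ℕ) = i by omega)) hji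

theorem psum_mono (u : Fin n → ℕ) : Monotone (psum u) :=
  fun _ _ hab => (psum_eq_add_sum u hab).symm ▸ Nat.le_add_right _ _

theorem psum_add_psum_le {u w : Fin n → ℕ} {a b : ℕ} (hab : a ≤ b)
    (h : ∀ j : Fin n, a ≤ j → j < b → u j ≤ w j) :
    psum u b + psum w a ≤ psum u a + psum w b := by
  rw [psum_eq_add_sum u hab, psum_eq_add_sum w hab]
  have := Finset.sum_le_sum fun j (hj : j ∈ univ.filter fun j : Fin n => a ≤ (j : ℕ) ∧ j < b) =>
    h j (Finset.mem_filter.mp hj).2.1 (Finset.mem_filter.mp hj).2.2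
  omega

theorem psum_succ_sub_eq {τ : ℕ → ℕ} (h0 : τ 0 = 0) (hτ : ∀ i < n, τ i ≤ τ (i + 1)) :
    ∀ i ≤ n, psum (fun k : Fin n => τ (k + 1) - τ k) i = τ i
  | 0, _ => by rw [psum_zero, h0]
  | i + 1, hi => by
    rw [psum_succ _ (by omega), psum_succ_sub_eq h0 hτ i (by omega)]
    have := hτ i (by omega)
    dsimp only
    omega

variable {α β : ℕ → ℕ}

def IsLPExponent (α β : ℕ → ℕ) (u : Fin n → ℕ) : Prop :=
  ∀ i : ℕ, 1 ≤ i → i ≤ n → α i ≤ psum u i ∧ psum u i ≤ β i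

theorem IsLPExponent.le_psum (hα0 : α 0 = 0) {u : Fin n → ℕ} (hu : IsLPExponent α β u)
    {i : ℕ} (hin : i ≤ n) : α i ≤ psum u i := by
  rcases Nat.eq_zero_or_pos i with rfl | hi
  · simp [hα0]
  · exact (hu i hi hin).1

theorem IsLPExponent.psum_le {u : Fin n → ℕ} (hu : IsLPExponent α β u) {i : ℕ} (hin : i ≤ n) :
    psum u i ≤ β i := by
  rcases Nat.eq_zero_or_pos i with rfl | hi
  · simp
  · exact (hu i hi hin).2

def Admissible (α β : ℕ → ℕ) (n : ℕ) (ρ : ℕ → ℕ) : Prop :=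
  ∀ a b, a ≤ b → b ≤ n → α b + ρ a ≤ β a + ρ b

/-- The largest path under `β` starting at `0` whose increments are bounded by those of `ρ`. -/
def greedy (β ρ : ℕ → ℕ) : ℕ → ℕ
  | 0 => 0
  | i + 1 => min (β (i + 1)) (greedy β ρ i + (ρ (i + 1) - ρ i))

theorem exists_isLPExponent_le_iff (hα0 : α 0 = 0) (hβ0 : β 0 = 0)
    (hβ : MonotoneOn β (Set.Iic n)) (w : Fin n → ℕ) :
    (∃ u, IsLPExponent α β u ∧ u ≤ w) ↔ Admissible α β n (psum w) := by
  constructor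
  · rintro ⟨u, hu, huw⟩ a b hab hbn
    have := hu.le_psum hα0 hbn
    have := hu.psum_le (hab.trans hbn)
    have := psum_add_psum_le hab fun j _ _ => huw j
    omega
  · intro hw
    set τ := greedy β (psum w)
    have hτ_succ (i : ℕ) : τ (i + 1) = min (β (i + 1)) (τ i + (psum w (i + 1) - psum w i)) :=
      rfl
    have hτβ (i : ℕ) : τ i ≤ β i := by
      cases i with
      | zero => exact Nat.zero_le _
      | succ i => exact hτ_succ i ▸ min_le_left _ _
    have hτ_step (i : ℕ) (hi : i < n) : τ i ≤ τ (i + 1) := by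
      have : β i ≤ β (i + 1) := hβ (Set.mem_Iic.mpr hi.le) (Set.mem_Iic.mpr hi) (by omega)
      have := hτβ i
      rw [hτ_succ]
      omega
    -- `τ i` is reached from the last index `j ≤ i` where it touched `β`.
    have hτ_eq (i : ℕ) : ∃ j ≤ i, τ i = β j + (psum w i - psum w j) := by
      induction i with
      | zero => exact ⟨0, le_rfl, by simp [τ, greedy, hβ0]⟩
      | succ i ih =>
        obtain ⟨j, hj, h⟩ := ih
        have := psum_mono w hj
        have := psum_mono w (Nat.le_add_right i 1)
        by_cases hmin : β (i + 1) ≤ τ i + (psum w (i + 1) - psum w i)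
        · exact ⟨i + 1, le_rfl, by rw [hτ_succ]; omega⟩
        · exact ⟨j, by omega, by rw [hτ_succ]; omega⟩
    refine ⟨fun k => τ (k + 1) - τ k, fun i _ hin => ?_, fun k => ?_⟩
    · rw [psum_succ_sub_eq rfl hτ_step i hin]
      obtain ⟨j, hj, h⟩ := hτ_eq i
      have := hw j i hj hin
      exact ⟨by omega, hτβ i⟩
    · have := hτ_succ k
      have := psum_succ w k.2
      simp only [Fin.eta] at this ⊢
      omega

def bump (ρ : ℕ → ℕ) (J i : ℕ) : ℕ :=
  ρ i + if J ≤ i then 1 else 0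

theorem psum_pi_single_add (j : Fin n) (v : Fin n → ℕ) :
    psum (Pi.single j 1 + v) = bump (psum v) (j + 1) := by
  ext i
  rw [psum_add, psum_pi_single, bump]
  split_ifs <;> omega

variable {ρ : ℕ → ℕ} {J : ℕ}

theorem admissible_bump_iff (hJ : J = 0 ∨ n < J) :
    Admissible α β n (bump ρ J) ↔ Admissible α β n ρ := by
  refine forall₄_congr fun a b _ hbn => ?_
  simp only [bump]
  split_ifs <;> omega

theorem Admissible.le_of_bump (h : Admissible α β n (bump ρ J)) ⦃a b : ℕ⦄ (hab : a ≤ b)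
    (hbn : b ≤ n) :
    (J ≤ a ∨ b < J → α b + ρ a ≤ β a + ρ b) ∧ α b + ρ a ≤ β a + ρ b + 1 := by
  have := h a b hab hbn
  simp only [bump] at this
  split_ifs at this <;> omega

theorem exists_lt_of_not_admissible_bump (h : ¬ Admissible α β n (bump ρ J)) :
    ∃ a b, a ≤ b ∧ b ≤ n ∧ β a + ρ b < α b + ρ a ∧
      (a < J → J ≤ b → β a + ρ b + 1 < α b + ρ a) := by
  simp only [Admissible, bump, not_forall, not_le] at h
  obtain ⟨a, b, hab, hbn, h⟩ := h
  refine ⟨a, b, hab, hbn, ?_, ?_⟩ <;> split_ifs at h <;> omega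

variable {s t : ℕ}

theorem conditions_of_admissible_bump (hρ : Monotone ρ) (hs : 1 ≤ s) (hst : s ≤ t)
    (htn : t ≤ n) (hin : ∀ J, s ≤ J → J ≤ t → Admissible α β n (bump ρ J))
    (hout : ∀ J ≤ n + 1, J < s ∨ t < J → ¬ Admissible α β n (bump ρ J)) :
    (∀ i, s ≤ i → i < t → α i < β i) ∧
      β (s - 1) < β s ∧ β (s - 1) < α t ∧ α (t - 1) < α t := by
  have hS := (hin s le_rfl hst).le_of_bump
  have hT := (hin t hst le_rfl).le_of_bump
  obtain ⟨a₁, b₁, hab₁, hbn₁, hv₁, hv₁'⟩ :=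
    exists_lt_of_not_admissible_bump (hout (s - 1) (by omega) (Or.inl (by omega)))
  obtain ⟨a₂, b₂, hab₂, hbn₂, hv₂, hv₂'⟩ :=
    exists_lt_of_not_admissible_bump (hout (t + 1) (by omega) (Or.inr (by omega)))
  have hS₁ := hS hab₁ hbn₁
  have hS₂ := hS hab₂ hbn₂
  have hT₂ := hT hab₂ hbn₂
  obtain rfl : a₁ = s - 1 := by omega
  obtain rfl : t = b₂ := by omega
  -- the defects of `(s - 1, b₁)` and `(a₂, t)` add up to those of `(s - 1, t)` and `(a₂, b₁)`
  have htight : α t + ρ (s - 1) = β (s - 1) + ρ t + 1 := by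
    have := hS (a := s - 1) (b := t) (by omega) htn
    have := hS (a := a₂) (b := b₁) (by omega) hbn₁
    omega
  have := hρ (show s - 1 ≤ t by omega)
  refine ⟨fun i hsi hit => ?_, ?_, by omega, ?_⟩
  · have := hS (a := i) (b := t) hit.le htn
    have := hT (a := s - 1) (b := i) (by omega) (by omega)
    omega
  · have := hS (a := s) (b := t) hst htn
    have := hρ (show s - 1 ≤ s by omega)
    omega
  · have := hT (a := s - 1) (b := t - 1) (by omega) (by omega)
    have := hρ (show t - 1 ≤ t by omega)
    omega

theorem conditions_of_colon (hα0 : α 0 = 0) (hβ0 : β 0 = 0) (hβ : MonotoneOn β (Set.Iic n))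
    (hs : 1 ≤ s) (hst : s ≤ t) (htn : t ≤ n) {v : Fin n → ℕ}
    (hv : ∀ m, (∃ w, IsLPExponent α β w ∧ w ≤ m + v) ↔
      ∃ i ∈ {i : Fin n | s ≤ (i : ℕ) + 1 ∧ (i : ℕ) + 1 ≤ t}, m i ≠ 0) :
    (∀ i, s ≤ i → i < t → α i < β i) ∧
      β (s - 1) < β s ∧ β (s - 1) < α t ∧ α (t - 1) < α t := by
  have hadm (m : Fin n → ℕ) : Admissible α β n (psum (m + v)) ↔
      ∃ i : Fin n, (s ≤ (i : ℕ) + 1 ∧ (i : ℕ) + 1 ≤ t) ∧ m i ≠ 0 := by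
    rw [← exists_isLPExponent_le_iff hα0 hβ0 hβ]
    exact hv m
  have hsingle (j : Fin n) :
      Admissible α β n (bump (psum v) (j + 1)) ↔ s ≤ (j : ℕ) + 1 ∧ (j : ℕ) + 1 ≤ t := by
    rw [← psum_pi_single_add, hadm]
    simp [Pi.single_apply]
  have hzero : ¬ Admissible α β n (psum v) := by simpa using hadm 0
  refine conditions_of_admissible_bump (psum_mono v) hs hst htn (fun J hsJ hJt => ?_)
    fun J hJ hJst => ?_
  · obtain ⟨j, rfl⟩ : ∃ j, J = j + 1 := ⟨J - 1, by omega⟩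
    exact (hsingle ⟨j, by omega⟩).mpr ⟨hsJ, hJt⟩
  · by_cases hJ0 : J = 0 ∨ n < J
    · rwa [admissible_bump_iff hJ0]
    · obtain ⟨j, rfl⟩ : ∃ j, J = j + 1 := ⟨J - 1, by omega⟩
      intro h
      have : s ≤ j + 1 ∧ j + 1 ≤ t := (hsingle ⟨j, by omega⟩).mp h
      omega

/-- The partial sums of an exponent `v` with `(I : x^v) = P_{[s,t]}`: they equal `β_i` for
`i < s`, `max(β_{s-1}, α_i)` for `s ≤ i < t`, and `α_i - 1` for `i ≥ t`. -/
def colonWitness (α β : ℕ → ℕ) (s t i : ℕ) : ℕ :=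
  min (β i) (max (β (s - 1)) (α i - if t ≤ i then 1 else 0))

theorem colonWitness_zero (hβ0 : β 0 = 0) : colonWitness α β s t 0 = 0 := by
  simp [colonWitness, hβ0]

theorem colonWitness_sub_one : colonWitness α β s t (s - 1) = β (s - 1) :=
  min_eq_left (le_max_left _ _)

theorem colonWitness_self (ht : α t ≤ β t) (hC : β (s - 1) < α t) :
    colonWitness α β s t t = α t - 1 := by
  simp only [colonWitness, le_refl, if_true]
  omega

theorem colonWitness_le_succ (hα : MonotoneOn α (Set.Iic n)) (hβ : MonotoneOn β (Set.Iic n))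
    (hD : α (t - 1) < α t) {i : ℕ} (hi : i < n) :
    colonWitness α β s t i ≤ colonWitness α β s t (i + 1) := by
  have : α i ≤ α (i + 1) := hα (Set.mem_Iic.mpr hi.le) (Set.mem_Iic.mpr hi) (by omega)
  have : β i ≤ β (i + 1) := hβ (Set.mem_Iic.mpr hi.le) (Set.mem_Iic.mpr hi) (by omega)
  have : i + 1 = t → α i < α (i + 1) := by
    rintro rfl
    simpa using hD
  simp only [colonWitness]
  split_ifs <;> omega

theorem le_bump_colonWitness_le (hα : MonotoneOn α (Set.Iic n)) (hβ : MonotoneOn β (Set.Iic n))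
    (hαβ : ∀ i ≤ n, α i ≤ β i) (hA : ∀ i, s ≤ i → i < t → α i < β i) (hB : β (s - 1) < β s)
    (hC : β (s - 1) < α t) {J i : ℕ} (hsJ : s ≤ J) (hJt : J ≤ t) (hin : i ≤ n) :
    α i ≤ bump (colonWitness α β s t) J i ∧ bump (colonWitness α β s t) J i ≤ β i := by
  have := hαβ i hin
  have : s ≤ i → β s ≤ β i := fun h => hβ (Set.mem_Iic.mpr (by omega)) (Set.mem_Iic.mpr hin) h
  have : t ≤ i → α t ≤ α i := fun h => hα (Set.mem_Iic.mpr (by omega)) (Set.mem_Iic.mpr hin) h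
  have := hA i
  simp only [bump, colonWitness]
  split_ifs <;> omega

theorem exists_le_add_iff_of_single_add {ι : Type*} [DecidableEq ι] {P : (ι → ℕ) → Prop}
    {T : Set ι} {v : ι → ℕ} (h₁ : ∀ j ∈ T, P (Pi.single j 1 + v))
    (h₂ : ∀ w, P w → ∃ j ∈ T, v j < w j) (m : ι → ℕ) :
    (∃ w, P w ∧ w ≤ m + v) ↔ ∃ j ∈ T, m j ≠ 0 := by
  refine ⟨fun ⟨w, hw, hwm⟩ => ?_, fun ⟨j, hj, hmj⟩ => ?_⟩
  · obtain ⟨j, hj, hvw⟩ := h₂ w hw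
    have := hwm j
    exact ⟨j, hj, by simp only [Pi.add_apply] at this; omega⟩
  · refine ⟨_, h₁ j hj, add_le_add_left (fun i => ?_) v⟩
    by_cases hij : i = j
    · subst hij
      simpa [Nat.one_le_iff_ne_zero] using hmj
    · simp [hij]

theorem exists_colon_of_conditions (hα0 : α 0 = 0) (hβ0 : β 0 = 0)
    (hα : MonotoneOn α (Set.Iic n)) (hβ : MonotoneOn β (Set.Iic n))
    (hαβ : ∀ i ≤ n, α i ≤ β i) (hs : 1 ≤ s) (hst : s ≤ t) (htn : t ≤ n)
    (hA : ∀ i, s ≤ i → i < t → α i < β i) (hB : β (s - 1) < β s)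
    (hC : β (s - 1) < α t) (hD : α (t - 1) < α t) :
    ∃ v : Fin n → ℕ, ∀ m, (∃ w, IsLPExponent α β w ∧ w ≤ m + v) ↔
      ∃ i ∈ {i : Fin n | s ≤ (i : ℕ) + 1 ∧ (i : ℕ) + 1 ≤ t}, m i ≠ 0 := by
  have hpsum := psum_succ_sub_eq (colonWitness_zero (s := s) (t := t) (α := α) hβ0)
    fun i hi => colonWitness_le_succ hα hβ hD hi
  refine ⟨fun k => colonWitness α β s t (k + 1) - colonWitness α β s t k,
    exists_le_add_iff_of_single_add (fun j hj i _ hin => ?_) fun u hu => ?_⟩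
  · rw [psum_pi_single_add, bump, hpsum i hin]
    exact le_bump_colonWitness_le hα hβ hαβ hA hB hC hj.1 hj.2 hin
  · by_contra! h
    have := psum_add_psum_le (a := s - 1) (b := t) (by omega) fun j h1 h2 =>
      h j ⟨by omega, by omega⟩
    rw [hpsum t htn, hpsum (s - 1) (by omega), colonWitness_self (hαβ t htn) hC,
      colonWitness_sub_one] at this
    have := hu.le_psum hα0 htn
    have := hu.psum_le (i := s - 1) (by omega)
    omega

theorem span_X_mem_associatedPrimes_iff (K : Type*) [Field K] (hα0 : α 0 = 0)
    (hβ0 : β 0 = 0) (hα : MonotoneOn α (Set.Iic n)) (hβ : MonotoneOn β (Set.Iic n))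
    (hαβ : ∀ i ≤ n, α i ≤ β i) (hs : 1 ≤ s) (hst : s ≤ t) (htn : t ≤ n) :
    Ideal.span (X '' {i : Fin n | s ≤ (i : ℕ) + 1 ∧ (i : ℕ) + 1 ≤ t}) ∈
        associatedPrimes (MvPolynomial (Fin n) K)
          (MvPolynomial (Fin n) K ⧸ monomialIdeal K {w : Fin n →₀ ℕ | IsLPExponent α β ⇑w}) ↔
      (∀ i, s ≤ i → i < t → α i < β i) ∧
        β (s - 1) < β s ∧ β (s - 1) < α t ∧ α (t - 1) < α t := by
  rw [span_X_image_mem_associatedPrimes_iff, Finsupp.exists_colon_iff_exists_fun]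
  exact ⟨fun ⟨_, hv⟩ => conditions_of_colon hα0 hβ0 hβ hs hst htn hv,
    fun ⟨hA, hB, hC, hD⟩ => exists_colon_of_conditions hα0 hβ0 hα hβ hαβ hs hst htn hA hB hC hD⟩

end LPPolymatroidal

theorem LP_ass_characterization_general {n : ℕ} (K : Type*) [Field K]
    (α β : ℕ → ℕ) (hα0 : α 0 = 0) (hβ0 : β 0 = 0)
    (hαm : ∀ i, i < n → α i ≤ α (i + 1)) (hβm : ∀ i, i < n → β i ≤ β (i + 1))
    (hαβ : ∀ i, i ≤ n → α i ≤ β i)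
    (I : Ideal (MvPolynomial (Fin n) K))
    (hI : I = Ideal.span { m : MvPolynomial (Fin n) K | ∃ u : Fin n → ℕ,
      (∀ i : ℕ, 1 ≤ i → i ≤ n → α i ≤ psum u i ∧ psum u i ≤ β i) ∧
      m = ∏ i, (X i : MvPolynomial (Fin n) K) ^ u i }) :
    (∀ s t : ℕ, 1 ≤ s → s ≤ t → t ≤ n →
      (Ideal.span ((fun i => (X i : MvPolynomial (Fin n) K)) ''
          { i : Fin n | s ≤ (i : ℕ) + 1 ∧ (i : ℕ) + 1 ≤ t }) ∈
        associatedPrimes (MvPolynomial (Fin n) K) (MvPolynomial (Fin n) K ⧸ I) ↔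
      (∀ i : ℕ, s ≤ i → i < t → α i < β i) ∧
        β (s - 1) < β s ∧ β (s - 1) < α t ∧ α (t - 1) < α t)) ∧
    (∀ t : ℕ, 1 ≤ t → t ≤ n →
      (Ideal.span ((fun i => (X i : MvPolynomial (Fin n) K)) ''
          { i : Fin n | (i : ℕ) + 1 = t }) ∈
        associatedPrimes (MvPolynomial (Fin n) K) (MvPolynomial (Fin n) K ⧸ I) ↔
      β (t - 1) < α t)) := by
  obtain rfl : I = monomialIdeal K {w : Fin n →₀ ℕ | LPPolymatroidal.IsLPExponent α β ⇑w} :=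
    hI.trans (congrArg Ideal.span (setOf_prod_X_pow_eq_image_monomial _))
  have key (s t : ℕ) (hs : 1 ≤ s) (hst : s ≤ t) (htn : t ≤ n) :=
    LPPolymatroidal.span_X_mem_associatedPrimes_iff K hα0 hβ0 (monotoneOn_Iic_of_le_succ hαm)
      (monotoneOn_Iic_of_le_succ hβm) hαβ hs hst htn
  refine ⟨key, fun t ht htn => ?_⟩
  have hsingleton :
      {i : Fin n | (i : ℕ) + 1 = t} = {i : Fin n | t ≤ (i : ℕ) + 1 ∧ (i : ℕ) + 1 ≤ t} :=
    Set.ext fun _ => ⟨fun h => ⟨h.ge, h.le⟩, fun h => le_antisymm h.2 h.1⟩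
  rw [hsingleton, key t t ht le_rfl htn]
  have := hαβ t htn
  have := hαβ (t - 1) (by omega)
  exact ⟨fun h => h.2.2.1, fun h => ⟨fun i _ _ => by omega, by omega, h, by omega⟩⟩

/-- characterization of the associated primes `P_{[s,t]}` of an
LP-polymatroidal ideal of type `(α,β)` (with the convention `α_0 = β_0 = 0`);
in particular `(x_t) ∈ Ass(S/I)` iff `α_t > β_{t−1}`. -/
theorem LP_ass_characterization {n : ℕ} (K : Type*) [Field K] (hn : 0 < n) {d : ℕ} (hd : 0 < d)
    (α β : ℕ → ℕ) (hα0 : α 0 = 0) (hβ0 : β 0 = 0)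
    (hαm : ∀ i, i < n → α i ≤ α (i + 1)) (hβm : ∀ i, i < n → β i ≤ β (i + 1))
    (hαn : α n = d) (hβn : β n = d)
    (hαβ : ∀ i, i ≤ n → α i ≤ β i)
    (I : Ideal (MvPolynomial (Fin n) K))
    (hI : I = Ideal.span { m : MvPolynomial (Fin n) K | ∃ u : Fin n → ℕ,
      (∀ i : ℕ, 1 ≤ i → i ≤ n → α i ≤ psum u i ∧ psum u i ≤ β i) ∧
      m = ∏ i, (X i : MvPolynomial (Fin n) K) ^ u i }) :
    (∀ s t : ℕ, 1 ≤ s → s ≤ t → t ≤ n →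
      (Ideal.span ((fun i => (X i : MvPolynomial (Fin n) K)) ''
          { i : Fin n | s ≤ (i : ℕ) + 1 ∧ (i : ℕ) + 1 ≤ t }) ∈
        associatedPrimes (MvPolynomial (Fin n) K) (MvPolynomial (Fin n) K ⧸ I) ↔
      (∀ i : ℕ, s ≤ i → i < t → α i < β i) ∧
        β (s - 1) < β s ∧ β (s - 1) < α t ∧ α (t - 1) < α t)) ∧
    (∀ t : ℕ, 1 ≤ t → t ≤ n →
      (Ideal.span ((fun i => (X i : MvPolynomial (Fin n) K)) ''
          { i : Fin n | (i : ℕ) + 1 = t }) ∈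
        associatedPrimes (MvPolynomial (Fin n) K) (MvPolynomial (Fin n) K ⧸ I) ↔
      β (t - 1) < α t)) :=
  LP_ass_characterization_general K α β hα0 hβ0 hαm hβm hαβ I hI
end
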